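/- arXiv:2308.12286 — 7 statements merged into one kernel-verified Lean document; each statement's English description precedes it below -/
import Mathlib

section
/- In a finite group G, two complements J and J' of a normal abelian subgroup N are conjugate in G if and only if for each prime p, some Sylow p-subgroup of J is conjugate in G to some Sylow p-subgroup of J'. -/
def ConjugateIn {G : Type*} [Group G] (A B : Subgroup G) : Prop :=
  ∃ g : G, A.map (MulAut.conj g).toMonoidHom = B

/-!
For `j ∈ J` let `d j ∈ N` be the element with `d j * j ∈ J'`. Then `d` is a 1-cocycle of `J`
with values in `N` (acted on by conjugation), and it is the coboundary `j ↦ j • y / y` exactly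
when `y⁻¹ J y = J'`. If `g = n k` (`n ∈ N`, `k ∈ J`) conjugates a Sylow `p`-subgroup `P` of `J`
into `J'`, then `d` is a coboundary on `k P k⁻¹`, and averaging over coset representatives makes
`d ^ [J : P]` a coboundary on all of `J`. The exponents `m` for which `d ^ m` is a coboundary
form a subgroup of `ℤ` containing, for every prime `p`, an integer prime to `p`; so it contains
`1`.
-/

theorem Int.one_mem_of_forall_prime_exists_not_dvd {S : AddSubgroup ℤ}
    (h : ∀ p : ℕ, p.Prime → ∃ m ∈ S, ¬ (p : ℤ) ∣ m) : (1 : ℤ) ∈ S := by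
  obtain ⟨a, rfl⟩ := Int.subgroup_cyclic S
  rw [← AddSubgroup.zmultiples_eq_closure] at h ⊢
  have ha : a.natAbs = 1 := by
    by_contra ha
    obtain ⟨p, hp, hpa⟩ := Nat.exists_prime_and_dvd ha
    obtain ⟨m, ⟨k, rfl⟩, hpm⟩ := h p hp
    exact hpm (Dvd.dvd.mul_left (Int.ofNat_dvd_left.mpr hpa) k)
  rcases Int.natAbs_eq_iff.mp ha with rfl | rfl
  · exact AddSubgroup.mem_zmultiples 1
  · exact neg_neg (1 : ℤ) ▸ AddSubgroup.neg_mem _ (AddSubgroup.mem_zmultiples _)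

namespace groupCohomology

variable {K M : Type*} [Group K] [CommGroup M] [MulDistribMulAction K M]

def coboundaryExponents (f : K → M) : AddSubgroup ℤ where
  carrier := {m | IsMulCoboundary₁ (f ^ m)}
  zero_mem' := ⟨1, fun g => by simp⟩
  add_mem' := by
    rintro a b ⟨x, hx⟩ ⟨y, hy⟩
    refine ⟨x * y, fun g => ?_⟩
    rw [Pi.pow_apply, zpow_add, ← Pi.pow_apply, ← Pi.pow_apply, ← hx, ← hy, smul_mul',
      mul_div_mul_comm]
  neg_mem' := by
    rintro a ⟨x, hx⟩
    refine ⟨x⁻¹, fun g => ?_⟩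
    rw [Pi.pow_apply, zpow_neg, ← Pi.pow_apply, ← hx, smul_inv', inv_div_inv, inv_div]

theorem mem_coboundaryExponents {f : K → M} {m : ℤ} :
    m ∈ coboundaryExponents f ↔ IsMulCoboundary₁ (f ^ m) :=
  Iff.rfl

theorem IsMulCocycle₁.isMulCoboundary₁_pow_index {f : K → M} (hf : IsMulCocycle₁ f)
    (P : Subgroup K) [P.FiniteIndex] (hP : ∃ y : M, ∀ x ∈ P, x • y / y = f x) :
    IsMulCoboundary₁ (f ^ P.index) := by
  obtain ⟨y, hy⟩ := hP
  have : Fintype (K ⧸ P) := Fintype.ofFinite _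
  set r : K ⧸ P → K := Quotient.out
  have hr (x : K) (q : K ⧸ P) : ∃ π ∈ P, x * r q = r (x • q) * π := by
    refine ⟨(r (x • q))⁻¹ * (x * r q), ?_, by group⟩
    rw [← QuotientGroup.eq, QuotientGroup.out_eq']
    exact congrArg (x • ·) (QuotientGroup.out_eq' q).symm
  set A : M := ∏ q, f (r q)
  set B : M := ∏ q, r q • y
  refine ⟨B / A, fun x => ?_⟩
  have hA : ∏ q, f (r (x • q)) = A := Fintype.prod_equiv (MulAction.toPerm x) _ _ fun _ => rfl
  have hB : ∏ q, r (x • q) • y = B := Fintype.prod_equiv (MulAction.toPerm x) _ _ fun _ => rfl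
  have hcocycle : ∏ q, f (x * r q) = x • A * f x ^ P.index := by
    rw [Finset.prod_congr rfl fun q _ => hf x (r q), Finset.prod_mul_distrib, Finset.smul_prod',
      Finset.prod_const, Finset.card_univ, P.index_eq_card, Nat.card_eq_fintype_card]
  have hcoboundary : ∏ q, f (x * r q) = x • B / B * A := by
    have hterm (q : K ⧸ P) :
        f (x * r q) = x • (r q • y) / r (x • q) • y * f (r (x • q)) := by
      obtain ⟨π, hπ, hq⟩ := hr x q
      rw [hq, hf, ← hy π hπ, smul_div', ← mul_smul, ← mul_smul, ← hq]
    rw [Finset.prod_congr rfl fun q _ => hterm q, Finset.prod_mul_distrib, Finset.prod_div_distrib,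
      ← Finset.smul_prod', hA, hB]
  rw [Pi.pow_apply, smul_div', eq_div_of_mul_eq'' (hcocycle.symm.trans hcoboundary)]
  simp only [div_eq_mul_inv, mul_inv_rev, inv_inv]
  ac_rfl

theorem IsMulCocycle₁.isMulCoboundary₁_of_forall_prime {f : K → M} (hf : IsMulCocycle₁ f)
    (h : ∀ p : ℕ, p.Prime →
      ∃ P : Subgroup K, ¬ p ∣ P.index ∧ ∃ y : M, ∀ x ∈ P, x • y / y = f x) :
    IsMulCoboundary₁ f := by
  have h1 : (1 : ℤ) ∈ coboundaryExponents f := by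
    refine Int.one_mem_of_forall_prime_exists_not_dvd fun p hp => ?_
    obtain ⟨P, hpP, hP⟩ := h p hp
    have : P.FiniteIndex := ⟨fun h0 => hpP (h0 ▸ dvd_zero p)⟩
    refine ⟨P.index, ?_, by exact_mod_cast hpP⟩
    rw [mem_coboundaryExponents, zpow_natCast]
    exact hf.isMulCoboundary₁_pow_index P hP
  rwa [mem_coboundaryExponents, zpow_one] at h1

end groupCohomology

open groupCohomology

namespace Subgroup

variable {G : Type*} [Group G]

abbrev mulDistribMulActionConj (H N : Subgroup G) [N.Normal] : MulDistribMulAction H N :=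
  MulDistribMulAction.compHom N ((ConjAct.toConjAct : G ≃* ConjAct G).toMonoidHom.comp H.subtype)

attribute [local instance] mulDistribMulActionConj

theorem coe_conj_smul {H N : Subgroup G} [N.Normal] (x : H) (n : N) :
    ((x • n : N) : G) = x * n * (x : G)⁻¹ :=
  rfl

namespace IsComplement'

variable {N K : Subgroup G} (hK : IsComplement' N K)

/-- Restricted to another complement of `N`, this is the 1-cocycle comparing it with `K`. -/
noncomputable def cocycle (g : G) : N := (hK.equiv g).1⁻¹

theorem cocycle_mul_mem (g : G) : (hK.cocycle g : G) * g ∈ K := by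
  rw [cocycle, coe_inv, ← IsComplement.equiv_snd_eq_inv_mul]
  exact (hK.equiv g).2.2

theorem cocycle_eq_iff {g n : G} (hn : n ∈ N) : (hK.cocycle g : G) = n ↔ n * g ∈ K := by
  refine ⟨fun h => h ▸ hK.cocycle_mul_mem g, fun h => ?_⟩
  have hN : (hK.cocycle g : G) * n⁻¹ ∈ N := N.mul_mem (hK.cocycle g).2 (N.inv_mem hn)
  have hK' : (hK.cocycle g : G) * n⁻¹ ∈ K := by
    simpa [mul_assoc] using K.mul_mem (hK.cocycle_mul_mem g) (K.inv_mem h)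
  exact mul_inv_eq_one.mp (disjoint_def.mp hK.disjoint hN hK')

open scoped IsMulCommutative

variable [N.Normal] [IsMulCommutative N]

theorem isMulCocycle₁_cocycle (H : Subgroup G) : IsMulCocycle₁ fun x : H => hK.cocycle x := by
  intro x y
  rw [mul_comm]
  have hN := N.mul_mem (hK.cocycle x).2 (x • hK.cocycle y).2
  refine Subtype.ext ((hK.cocycle_eq_iff hN).mpr ?_)
  rw [coe_conj_smul]
  simpa only [coe_mul, mul_assoc, inv_mul_cancel_left] using
    K.mul_mem (hK.cocycle_mul_mem x) (hK.cocycle_mul_mem y)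

theorem smul_div_eq_cocycle_iff {H : Subgroup G} (x : H) (y : N) :
    x • y / y = hK.cocycle x ↔ (y : G)⁻¹ * x * y ∈ K := by
  rw [eq_comm, ← Subtype.coe_inj, hK.cocycle_eq_iff (x • y / y).2, div_eq_inv_mul, coe_mul,
    coe_conj_smul]
  simp only [coe_inv, mul_assoc, inv_mul_cancel, mul_one]

theorem conjugateIn_of_forall_prime [Finite G] {J J' : Subgroup G} (hJ : IsComplement' N J)
    (hJ' : IsComplement' N J')
    (h : ∀ p : ℕ, p.Prime → ∃ (P : Sylow p J) (g : G),
      ((P : Subgroup J).map J.subtype).map (MulAut.conj g).toMonoidHom ≤ J') :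
    ConjugateIn J J' := by
  have hlocal (p : ℕ) (hp : p.Prime) : ∃ P : Subgroup J, ¬ p ∣ P.index ∧
      ∃ y : N, ∀ x ∈ P, x • y / y = hJ'.cocycle x := by
    have : Fact p.Prime := ⟨hp⟩
    obtain ⟨P, g, hPg⟩ := h p hp
    obtain ⟨⟨⟨n, hn⟩, k⟩, rfl, -⟩ := hJ.existsUnique g
    refine ⟨(k • P : Sylow p J), Sylow.not_dvd_index _, ⟨n, hn⟩⁻¹, fun x hx => ?_⟩
    rw [hJ'.smul_div_eq_cocycle_iff]
    rw [Sylow.coe_subgroup_smul, mem_pointwise_smul_iff_inv_smul_mem] at hx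
    simpa [MulAut.conj_apply, mul_assoc] using
      hPg (mem_map_of_mem _ (mem_map_of_mem J.subtype hx))
  obtain ⟨y, hy⟩ := (hJ'.isMulCocycle₁_cocycle J).isMulCoboundary₁_of_forall_prime hlocal
  have hle : J.map (MulAut.conj (y : G)⁻¹).toMonoidHom ≤ J' := by
    rintro _ ⟨x, hx, rfl⟩
    simpa [MulAut.conj_apply] using (hJ'.smul_div_eq_cocycle_iff ⟨x, hx⟩ y).mp (hy ⟨x, hx⟩)
  refine ⟨(y : G)⁻¹, eq_of_le_of_card_ge hle ?_⟩
  rw [card_map_of_injective (MulAut.conj _).injective, ← hJ.symm.index_eq_card,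
    ← hJ'.symm.index_eq_card]

end IsComplement'

end Subgroup

theorem ConjugateIn.exists_sylow {G : Type*} [Group G] [Finite G] {J J' : Subgroup G}
    (h : ConjugateIn J J') {p : ℕ} [Fact p.Prime] (P : Sylow p J) :
    ∃ P' : Sylow p J',
      ConjugateIn ((P : Subgroup J).map J.subtype) ((P' : Subgroup J').map J'.subtype) := by
  obtain ⟨g, rfl⟩ := h
  refine ⟨P.mapSurjective (MonoidHom.subgroupMap_surjective _ J), g, ?_⟩
  rw [Sylow.coe_mapSurjective, Subgroup.map_map, Subgroup.map_map]
  rfl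

/-- **Evans–Shin.**  In a finite group, two complements `J`, `J'` of a normal abelian
subgroup `N` are conjugate iff they are locally conjugate, i.e. for each prime `p`
some Sylow `p`-subgroup of `J` is conjugate in `G` to some Sylow `p`-subgroup of `J'`. -/
theorem stmt0 {G : Type*} [Group G] [Finite G] (N J J' : Subgroup G) [N.Normal]
    (hab : ∀ a ∈ N, ∀ b ∈ N, a * b = b * a)
    (hJ : Subgroup.IsComplement' N J) (hJ' : Subgroup.IsComplement' N J') :
    ConjugateIn J J' ↔
      ∀ p : ℕ, p.Prime → ∃ (P : Sylow p J) (P' : Sylow p J'),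
        ConjugateIn ((P : Subgroup J).map J.subtype) ((P' : Subgroup J').map J'.subtype) := by
  refine ⟨fun h p hp => ?_, fun h => ?_⟩
  · have : Fact p.Prime := ⟨hp⟩
    obtain ⟨P⟩ := Sylow.nonempty (p := p) (G := J)
    exact ⟨P, h.exists_sylow P⟩
  · have : IsMulCommutative N := ⟨⟨fun a b => Subtype.ext (hab a a.2 b b.2)⟩⟩
    refine hJ.conjugateIn_of_forall_prime hJ' fun p hp => ?_
    obtain ⟨P, P', g, hg⟩ := h p hp
    exact ⟨P, g, hg.le.trans (Subgroup.map_subtype_le _)⟩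
end

section
/- Let J be a finite group acting by automorphisms on a finite abelian group N, and let G = N ⋊ J act on a non-empty finite set Ω such that N acts transitively. If for each prime p some Sylow p-subgroup of J fixes a point of Ω, then J fixes a point of Ω. -/
open SemidirectProduct

lemma key_transfer {J M : Type*} [Group J] [Finite J] [CommGroup M]
    (Φ : J →* Monoid.End M) (c : J → M) (hc : ∀ g h, c (g * h) = c g * Φ g (c h))
    (P : Subgroup J) (x : M) (hx : ∀ h ∈ P, c h = x * Φ h x⁻¹) :
    ∃ y : M, ∀ g : J, c g ^ P.index = y * Φ g y⁻¹ := by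
  classical
  have : Fintype (J ⧸ P) := Fintype.ofFinite _
  have Φcomp : ∀ (a b : J) (m : M), Φ (a * b) m = Φ a (Φ b m) := by
    intro a b m; rw [map_mul]; rfl
  refine ⟨∏ q : J ⧸ P, (c q.out * Φ q.out x), ?_⟩
  intro g
  have key : ∀ q : J ⧸ P,
      Φ g (c q.out * Φ q.out x) = (c g)⁻¹ * (c (g • q).out * Φ (g • q).out x) := by
    intro q
    set t : J := q.out with ht
    set t' : J := (g • q).out with ht'
    have hmem : t'⁻¹ * (g * t) ∈ P := by
      rw [← QuotientGroup.eq, ht']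
      rw [show ((g * t : J) : J ⧸ P) = g • (t : J ⧸ P) from rfl, ht,
        QuotientGroup.out_eq', QuotientGroup.out_eq']
    set h : J := t'⁻¹ * (g * t) with hh
    have hgt : g * t = t' * h := by rw [hh]; group
    have e1 : Φ g (c t) = (c g)⁻¹ * c (g * t) := by
      rw [hc g t]; group
    have e4 : Φ t' (c h) = Φ t' x * (Φ (g * t) x)⁻¹ := by
      rw [hx h hmem, map_mul, map_inv, map_inv, ← Φcomp, ← hgt]
    have e2 : c (g * t) = c t' * (Φ t' x * (Φ (g * t) x)⁻¹) := by
      rw [hgt, hc t' h, ← hgt, e4]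
    have e3 : Φ g (Φ t x) = Φ (g * t) x := (Φcomp g t x).symm
    rw [map_mul, e1, e3, e2]
    group
  have hre : ∏ q : J ⧸ P, (c (g • q).out * Φ (g • q).out x)
      = ∏ q : J ⧸ P, (c q.out * Φ q.out x) :=
    Fintype.prod_bijective (g • ·) (MulAction.bijective g) _ _ (fun q => rfl)
  have h1 : Φ g (∏ q : J ⧸ P, (c q.out * Φ q.out x))
      = (c g)⁻¹ ^ Fintype.card (J ⧸ P) * ∏ q : J ⧸ P, (c q.out * Φ q.out x) := by
    rw [map_prod]
    simp only [key]
    rw [Finset.prod_mul_distrib, Finset.prod_const, Finset.card_univ, hre]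
  rw [map_inv, h1]
  rw [show P.index = Fintype.card (J ⧸ P) from by
    rw [Subgroup.index, Nat.card_eq_fintype_card]]
  group

lemma coboundary_of_sylow {J M : Type*} [Group J] [Finite J] [CommGroup M]
    (Φ : J →* Monoid.End M) (c : J → M) (hc : ∀ g h, c (g * h) = c g * Φ g (c h))
    (hsyl : ∀ p : ℕ, p.Prime → ∃ (P : Sylow p J) (x : M),
      ∀ h ∈ (P : Subgroup J), c h = x * Φ h x⁻¹) :
    ∃ n : M, ∀ g : J, c g = n * Φ g n⁻¹ := by
  classical
  have hc1 : c 1 = 1 := by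
    have h := hc 1 1
    rw [mul_one] at h
    have h2 : Φ 1 (c 1) = 1 := by
      have := h.symm
      rwa [left_eq_mul] at h
    rwa [map_one Φ] at h2
  by_cases hJ : Nat.card J = 1
  · have hsub : Subsingleton J := by
      rw [Nat.card_eq_one_iff_unique] at hJ
      exact hJ.1
    refine ⟨1, fun g => ?_⟩
    rw [Subsingleton.elim g 1, hc1, inv_one, map_one, mul_one]
  -- the additive subgroup of exponents z such that c^z is a coboundary
  · let I : AddSubgroup ℤ :=
      { carrier := {z : ℤ | ∃ n : M, ∀ g : J, c g ^ z = n * Φ g n⁻¹}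
        zero_mem' := ⟨1, fun g => by rw [zpow_zero, inv_one, map_one, mul_one]⟩
        add_mem' := by
          rintro a b ⟨n, hn⟩ ⟨m, hm⟩
          refine ⟨n * m, fun g => ?_⟩
          rw [zpow_add, hn g, hm g, mul_inv, map_mul]
          simp only [mul_comm, mul_assoc, mul_left_comm]
        neg_mem' := by
          rintro a ⟨n, hn⟩
          refine ⟨n⁻¹, fun g => ?_⟩
          rw [zpow_neg, hn g, mul_inv, inv_inv, ← map_inv, inv_inv] }
    have hgcd : ∀ a b : ℕ, (a : ℤ) ∈ I → (b : ℤ) ∈ I → ((Nat.gcd a b : ℕ) : ℤ) ∈ I := by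
      intro a b ha hb
      have h := Int.gcd_eq_gcd_ab (a : ℤ) (b : ℤ)
      rw [Int.gcd_natCast_natCast] at h
      rw [h]
      refine I.add_mem ?_ ?_
      · simpa [zsmul_eq_mul, mul_comm] using I.zsmul_mem ha (Int.gcdA a b)
      · simpa [zsmul_eq_mul, mul_comm] using I.zsmul_mem hb (Int.gcdB a b)
    choose P x hx using hsyl
    set F : ℕ → ℕ := fun p => if hp : p.Prime then ((P p hp) : Subgroup J).index else 0
      with hF
    have hFI : ∀ p : ℕ, (F p : ℤ) ∈ I := by
      intro p
      by_cases hp : p.Prime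
      · obtain ⟨y, hy⟩ := key_transfer Φ c hc (P p hp) (x p hp) (hx p hp)
        refine ⟨y, fun g => ?_⟩
        rw [hF]
        simp only [dif_pos hp]
        rw [zpow_natCast]
        exact hy g
      · rw [hF]
        simp only [dif_neg hp, Nat.cast_zero]
        exact I.zero_mem
    have hfold : ∀ s : Finset ℕ, ((s.gcd F : ℕ) : ℤ) ∈ I := by
      intro s
      induction s using Finset.induction_on with
      | empty => simpa using I.zero_mem
      | insert _ _ ha ih =>
        rw [Finset.gcd_insert]
        exact hgcd _ _ (hFI _) ih
    set s : Finset ℕ := (Nat.card J).primeFactors with hs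
    have hcard : Nat.card J ≠ 0 := Nat.card_pos.ne'
    have hFdvd : ∀ p ∈ s, F p ∣ Nat.card J := by
      intro p hp
      have hpp : p.Prime := Nat.prime_of_mem_primeFactors hp
      rw [hF]
      simp only [dif_pos hpp]
      exact Subgroup.index_dvd_card _
    have hs1 : s.gcd F = 1 := by
      by_contra hne
      have hnonempty : s.Nonempty := Nat.nonempty_primeFactors.mpr
        (lt_of_le_of_ne (Nat.one_le_iff_ne_zero.mpr hcard) (Ne.symm hJ))
      obtain ⟨q, hq, hqd⟩ := Nat.exists_prime_and_dvd hne
      obtain ⟨p₀, hp₀⟩ := hnonempty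
      have hq_card : q ∣ Nat.card J :=
        dvd_trans (hqd.trans (Finset.gcd_dvd hp₀)) (hFdvd p₀ hp₀)
      have hqs : q ∈ s := Nat.mem_primeFactors.mpr ⟨hq, hq_card, hcard⟩
      have hdvdFq : q ∣ F q := hqd.trans (Finset.gcd_dvd hqs)
      have : Fact q.Prime := ⟨hq⟩
      have hfin : Finite (Sylow q J) :=
        Finite.of_injective (fun P => (P : Subgroup J)) (fun _ _ h => Sylow.ext h)
      rw [hF] at hdvdFq
      simp only [dif_pos hq] at hdvdFq
      exact (P q hq).not_dvd_index hdvdFq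
    have h1 : (1 : ℤ) ∈ I := by
      have := hfold s
      rwa [hs1, Nat.cast_one] at this
    obtain ⟨n, hn⟩ := h1
    refine ⟨n, fun g => ?_⟩
    have := hn g
    rwa [zpow_one] at this

/-- **Theorem (abelian case).**  If a finite group `J` acts on a finite abelian group `N`
and `G = N ⋊ J` acts on a non-empty finite set `Ω` with `N` acting transitively, and for
each prime `p` some Sylow `p`-subgroup of `J` fixes a point, then `J` fixes a point. -/
theorem stmt1 {N J : Type*} [CommGroup N] [Group J] [Finite N] [Finite J]
    (φ : J →* MulAut N) (Ω : Type*) [Nonempty Ω] [Finite Ω]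
    [MulAction (N ⋊[φ] J) Ω]
    (htrans : ∀ ω ω' : Ω, ∃ n : N, (inl n : N ⋊[φ] J) • ω = ω')
    (hsyl : ∀ p : ℕ, p.Prime → ∃ (P : Sylow p J) (ω : Ω),
      ∀ h ∈ (P : Subgroup J), (inr h : N ⋊[φ] J) • ω = ω) :
    ∃ ω : Ω, ∀ j : J, (inr j : N ⋊[φ] J) • ω = ω := by
  classical
  obtain ⟨ω₀⟩ := (inferInstance : Nonempty Ω)
  set S : Subgroup N := (MulAction.stabilizer (N ⋊[φ] J) ω₀).comap inl with hSdef
  have memS : ∀ n : N, n ∈ S ↔ (inl n : N ⋊[φ] J) • ω₀ = ω₀ := fun n => Iff.rfl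
  have stab_all : ∀ n ∈ S, ∀ ω : Ω, (inl n : N ⋊[φ] J) • ω = ω := by
    intro n hn ω
    obtain ⟨m, hm⟩ := htrans ω₀ ω
    rw [← hm, ← mul_smul, ← map_mul, mul_comm, map_mul, mul_smul, (memS n).mp hn]
  have hswap : ∀ (g : J) (n : N) (ω : Ω),
      (inr g : N ⋊[φ] J) • (inl n : N ⋊[φ] J) • ω
        = (inl (φ g n) : N ⋊[φ] J) • (inr g : N ⋊[φ] J) • ω := by
    intro g n ω
    rw [← mul_smul, ← mul_smul, inl_aut, mul_assoc, mul_assoc, ← map_mul,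
      inv_mul_cancel, map_one, mul_one]
  have hφS : ∀ g : J, S ≤ S.comap (φ g).toMonoidHom := by
    intro g n hn
    rw [Subgroup.mem_comap]
    rw [memS]
    show (inl (φ g n) : N ⋊[φ] J) • ω₀ = ω₀
    rw [inl_aut, mul_smul, mul_smul, stab_all n hn, ← mul_smul, ← map_mul,
      mul_inv_cancel, map_one, one_smul]
  let Φ : J →* Monoid.End (N ⧸ S) :=
    { toFun := fun g => QuotientGroup.map S S (φ g).toMonoidHom (hφS g)
      map_one' := by
        refine MonoidHom.ext fun x => QuotientGroup.induction_on x fun n => ?_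
        rw [QuotientGroup.map_mk]
        simp
        rfl
      map_mul' := by
        intro a b
        refine MonoidHom.ext fun x => QuotientGroup.induction_on x fun n => ?_
        rw [QuotientGroup.map_mk]
        show _ = (QuotientGroup.map S S (φ a).toMonoidHom (hφS a))
          ((QuotientGroup.map S S (φ b).toMonoidHom (hφS b)) n)
        rw [QuotientGroup.map_mk, QuotientGroup.map_mk]
        simp }
  have hΦmk : ∀ (g : J) (n : N), Φ g (n : N ⧸ S) = ((φ g n : N) : N ⧸ S) :=
    fun g n => rfl
  choose d hd using fun j : J => htrans ω₀ ((inr j : N ⋊[φ] J) • ω₀)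
  have hcong : ∀ a b : N, (inl a : N ⋊[φ] J) • ω₀ = (inl b : N ⋊[φ] J) • ω₀ →
      (a : N ⧸ S) = (b : N ⧸ S) := by
    intro a b h
    rw [QuotientGroup.eq]
    rw [memS, map_mul, mul_smul, ← h, ← mul_smul, ← map_mul, inv_mul_cancel,
      map_one, one_smul]
  have hcong' : ∀ a b : N, (a : N ⧸ S) = (b : N ⧸ S) →
      (inl a : N ⋊[φ] J) • ω₀ = (inl b : N ⋊[φ] J) • ω₀ := by
    intro a b h
    have hs := QuotientGroup.eq.mp h
    conv_rhs => rw [show b = a * (a⁻¹ * b) by group]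
    rw [map_mul, mul_smul, stab_all _ hs]
  set c : J → N ⧸ S := fun j => ((d j : N) : N ⧸ S) with hcdef
  have hc : ∀ g h : J, c (g * h) = c g * Φ g (c h) := by
    intro g h
    rw [hcdef]
    show ((d (g * h) : N) : N ⧸ S) = _
    rw [hΦmk, ← QuotientGroup.mk_mul]
    apply hcong
    rw [hd (g * h), map_mul, mul_smul, ← hd h, hswap, ← hd g, ← mul_smul, ← map_mul,
      mul_comm ((φ g) (d h)) (d g)]
  have hsyl' : ∀ p : ℕ, p.Prime → ∃ (P : Sylow p J) (x : N ⧸ S),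
      ∀ h ∈ (P : Subgroup J), c h = x * Φ h x⁻¹ := by
    intro p hp
    obtain ⟨P, ω, hfix⟩ := hsyl p hp
    obtain ⟨m, hm⟩ := htrans ω₀ ω
    refine ⟨P, (m : N ⧸ S), fun h hh => ?_⟩
    have hfx : (inr h : N ⋊[φ] J) • (inl m : N ⋊[φ] J) • ω₀ = (inl m : N ⋊[φ] J) • ω₀ := by
      rw [hm]; exact hfix h hh
    rw [hswap, ← hd h] at hfx
    have h2 : (inl (d h) : N ⋊[φ] J) • ω₀ = (inl ((φ h m)⁻¹ * m) : N ⋊[φ] J) • ω₀ := by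
      rw [map_mul, mul_smul, ← hfx, ← mul_smul, ← mul_smul, ← map_mul, ← map_mul,
        inv_mul_cancel, one_mul]
    have h3 := hcong _ _ h2
    rw [hcdef]
    show ((d h : N) : N ⧸ S) = _
    rw [h3, ← map_inv, QuotientGroup.mk_mul, ← QuotientGroup.mk_inv, hΦmk]
    exact mul_comm _ _
  obtain ⟨nM, hn⟩ := coboundary_of_sylow Φ c hc hsyl'
  obtain ⟨n₀, hn₀⟩ := QuotientGroup.mk_surjective nM
  refine ⟨(inl n₀ : N ⋊[φ] J) • ω₀, fun j => ?_⟩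
  rw [hswap, ← hd j, ← mul_smul, ← map_mul]
  apply hcong'
  have hj := hn j
  rw [← hn₀, ← QuotientGroup.mk_inv, hΦmk] at hj
  rw [hcdef] at hj
  have hj' : ((d j : N) : N ⧸ S) = ((n₀ * (φ j n₀⁻¹) : N) : N ⧸ S) := by
    rw [QuotientGroup.mk_mul]; exact hj
  rw [QuotientGroup.mk_mul, hj', QuotientGroup.mk_mul, map_inv]
  rw [mul_comm ((n₀ : N ⧸ S)), QuotientGroup.mk_inv, mul_inv_cancel_left]
end

section
/- Let G be a finite group that splits over a normal abelian subgroup N. If for each prime p there exists a Sylow p-subgroup S of G such that any two complements of N ∩ S in S are conjugate in G, then any two complements of N in G are conjugate in G. -/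
namespace GaschuetzAux

open Subgroup

lemma map_conj_map_conj {G : Type*} [Group G] (H : Subgroup G) (g h : G) :
    (H.map (MulAut.conj g).toMonoidHom).map (MulAut.conj h).toMonoidHom
      = H.map (MulAut.conj (h * g)).toMonoidHom := by
  rw [Subgroup.map_map]; congr 1; ext x; simp [MulAut.conj_apply, mul_assoc]

lemma mem_map_conj {G : Type*} [Group G] {H : Subgroup G} {g x : G} :
    x ∈ H.map (MulAut.conj g).toMonoidHom ↔ ∃ y ∈ H, g * y * g⁻¹ = x := by
  simp [Subgroup.mem_map, MulAut.conj_apply]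

lemma card_map_conj {G : Type*} [Group G] (H : Subgroup G) (g : G) :
    Nat.card (H.map (MulAut.conj g).toMonoidHom) = Nat.card H :=
  (Nat.card_congr (Subgroup.equivMapOfInjective H _ (MulAut.conj g).injective).toEquiv).symm

lemma map_conj_one {G : Type*} [Group G] (H : Subgroup G) :
    H.map (MulAut.conj (1 : G)).toMonoidHom = H := by
  ext x; simp [mem_map_conj]

lemma cob_mul {G : Type*} [Group G] {N : Subgroup G} [hN : N.Normal]
    (hab : ∀ a ∈ N, ∀ b ∈ N, a * b = b * a)
    {a b : G} (ha : a ∈ N) (hb : b ∈ N) (j : G) :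
    (a * (j * a⁻¹ * j⁻¹)) * (b * (j * b⁻¹ * j⁻¹)) = (a * b) * (j * (a * b)⁻¹ * j⁻¹) := by
  have h1 : (j * a⁻¹ * j⁻¹) * b = b * (j * a⁻¹ * j⁻¹) :=
    hab _ (hN.conj_mem _ (N.inv_mem ha) j) _ hb
  have h2 : a⁻¹ * b⁻¹ = b⁻¹ * a⁻¹ := hab _ (N.inv_mem ha) _ (N.inv_mem hb)
  calc (a * (j * a⁻¹ * j⁻¹)) * (b * (j * b⁻¹ * j⁻¹))
      = a * ((j * a⁻¹ * j⁻¹) * b) * (j * b⁻¹ * j⁻¹) := by group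
    _ = a * (b * (j * a⁻¹ * j⁻¹)) * (j * b⁻¹ * j⁻¹) := by rw [h1]
    _ = (a * b) * (j * (a⁻¹ * b⁻¹) * j⁻¹) := by group
    _ = (a * b) * (j * (b⁻¹ * a⁻¹) * j⁻¹) := by rw [h2]
    _ = (a * b) * (j * (a * b)⁻¹ * j⁻¹) := by group

lemma card_inf_sylow {G : Type*} [Group G] [Finite G] (N : Subgroup G) [N.Normal]
    {p : ℕ} [Fact p.Prime] (S : Sylow p G) :
    Nat.card (N ⊓ (S : Subgroup G) : Subgroup G) = p ^ (Nat.card N).factorization p := by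
  classical
  have hp : p.Prime := Fact.out
  obtain ⟨k, hk⟩ := (IsPGroup.to_le S.2 inf_le_right).exists_card_eq
  have hNpos : Nat.card N ≠ 0 := Nat.card_pos.ne'
  have hupper : k ≤ (Nat.card N).factorization p :=
    (Nat.Prime.pow_dvd_iff_le_factorization hp hNpos).mp
      (hk ▸ Subgroup.card_dvd_of_le inf_le_left)
  set f : ↥(S : Subgroup G) →* G ⧸ N := (QuotientGroup.mk' N).comp (S : Subgroup G).subtype with hf
  have hker : f.ker = N.subgroupOf (S : Subgroup G) := by
    ext x
    simp [hf, MonoidHom.mem_ker, QuotientGroup.eq_one_iff, Subgroup.mem_subgroupOf]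
  have hcardker : Nat.card f.ker = p ^ k := by
    rw [hker, ← Subgroup.inf_subgroupOf_right, ← hk]
    exact Nat.card_congr (Subgroup.subgroupOfEquivOfLe inf_le_right).toEquiv
  obtain ⟨r, hr⟩ := (S.2.to_quotient f.ker).exists_card_eq
  have hrange : Nat.card (↥(S : Subgroup G) ⧸ f.ker) = Nat.card f.range :=
    Nat.card_congr (QuotientGroup.quotientKerEquivRange f).toEquiv
  have hQpos : Nat.card (G ⧸ N) ≠ 0 := Nat.card_pos.ne'
  have hrle : r ≤ (Nat.card (G ⧸ N)).factorization p :=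
    (Nat.Prime.pow_dvd_iff_le_factorization hp hQpos).mp
      (by rw [← hr, hrange]; exact Subgroup.card_subgroup_dvd_card f.range)
  have hGcard : Nat.card G = Nat.card (G ⧸ N) * Nat.card N :=
    Subgroup.card_eq_card_quotient_mul_card_subgroup N
  have hfact : (Nat.card G).factorization p
      = (Nat.card (G ⧸ N)).factorization p + (Nat.card N).factorization p := by
    rw [hGcard, Nat.factorization_mul hQpos hNpos]; rfl
  have hSsplit : Nat.card ↥(S : Subgroup G) = p ^ (r + k) := by
    rw [Subgroup.card_eq_card_quotient_mul_card_subgroup f.ker, hcardker, hr, pow_add]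
  have hScard : Nat.card ↥(S : Subgroup G) = p ^ (Nat.card G).factorization p :=
    S.card_eq_multiplicity
  have hpow : p ^ (r + k) = p ^ (Nat.card G).factorization p := by
    rw [← hSsplit, hScard]
  have hrk : r + k = (Nat.card G).factorization p :=
    Nat.pow_right_injective hp.two_le hpow
  have : k = (Nat.card N).factorization p := by omega
  rw [hk, this]

lemma exists_conj_syl {G : Type*} [Group G] [Finite G] {N J : Subgroup G} [N.Normal]
    {p : ℕ} [Fact p.Prime] (hJ : N.IsComplement' J) (S : Sylow p G) (P : Sylow p ↥J) :
    ∃ g : G, (((P : Subgroup ↥J).map J.subtype).map (MulAut.conj g).toMonoidHom ≤ S ∧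
      Subgroup.IsComplement' ((N ⊓ (S : Subgroup G)).subgroupOf S)
        ((((P : Subgroup ↥J).map J.subtype).map (MulAut.conj g).toMonoidHom).subgroupOf S)) := by
  classical
  have hp : p.Prime := Fact.out
  set Pg : Subgroup G := (P : Subgroup ↥J).map J.subtype with hPg
  have hPgJ : Pg ≤ J := Subgroup.map_subtype_le _
  have hPgp : IsPGroup p Pg := IsPGroup.map P.2 J.subtype
  obtain ⟨Q, hPQ⟩ := hPgp.exists_le_sylow
  obtain ⟨g, hg⟩ := MulAction.exists_smul_eq G Q S
  have hSQ : (S : Subgroup G) = (Q : Subgroup G).map (MulAut.conj g).toMonoidHom := by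
    rw [← hg]
    rfl
  set K : Subgroup G := Pg.map (MulAut.conj g).toMonoidHom with hK
  have hKS : K ≤ (S : Subgroup G) := by
    rw [hSQ]; exact Subgroup.map_mono hPQ
  refine ⟨g, hKS, ?_⟩
  -- disjointness
  have hNK : ∀ x : G, x ∈ N → x ∈ K → x = 1 := by
    intro x hxN hxK
    obtain ⟨y, hy, rfl⟩ := mem_map_conj.mp hxK
    have hyN : y ∈ N := by
      have := (by assumption : Subgroup.Normal N).conj_mem _ hxN g⁻¹
      simpa [mul_assoc] using this
    have : y = 1 := Subgroup.disjoint_def.mp hJ.disjoint hyN (hPgJ hy)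
    simp [this]
  have hdisj : Disjoint ((N ⊓ (S : Subgroup G)).subgroupOf S) (K.subgroupOf S) := by
    rw [Subgroup.disjoint_def]
    intro x hx hx'
    have h1 : (x : G) ∈ N := (Subgroup.mem_subgroupOf.mp hx).1
    have h2 : (x : G) ∈ K := Subgroup.mem_subgroupOf.mp hx'
    have : (x : G) = 1 := hNK _ h1 h2
    exact Subtype.ext this
  -- cards
  have hcardK : Nat.card K = p ^ (Nat.card ↥J).factorization p := by
    rw [hK, card_map_conj, hPg,
      ← Nat.card_congr (Subgroup.equivMapOfInjective _ J.subtype J.subtype_injective).toEquiv]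
    exact P.card_eq_multiplicity
  have hNpos : Nat.card N ≠ 0 := Nat.card_pos.ne'
  have hJpos : Nat.card J ≠ 0 := Nat.card_pos.ne'
  have hfact : (Nat.card G).factorization p
      = (Nat.card N).factorization p + (Nat.card ↥J).factorization p := by
    rw [← hJ.card_mul, Nat.factorization_mul hNpos hJpos]; rfl
  have hcards : Nat.card ((N ⊓ (S : Subgroup G)).subgroupOf S) * Nat.card (K.subgroupOf S)
      = Nat.card ↥(S : Subgroup G) := by
    rw [Nat.card_congr (Subgroup.subgroupOfEquivOfLe inf_le_right).toEquiv,
      Nat.card_congr (Subgroup.subgroupOfEquivOfLe hKS).toEquiv,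
      card_inf_sylow N S, hcardK, S.card_eq_multiplicity, hfact, pow_add]
  exact Subgroup.isComplement'_of_card_mul_and_disjoint hcards hdisj

lemma transfer_coboundary {G : Type*} [Group G] [Finite G] {N J : Subgroup G} [hN : N.Normal]
    (hab : ∀ a ∈ N, ∀ b ∈ N, a * b = b * a)
    (P : Subgroup ↥J) (α : G → G)
    (hmem : ∀ g, α g ∈ N)
    (hcoc : ∀ g h : G, α (g * h) = α g * (g * α h * g⁻¹))
    (hvan : ∀ x : ↥J, x ∈ P → α ↑x = 1) :
    ∃ a ∈ N, ∀ j ∈ J, α j ^ (Nat.card (↥J ⧸ P)) = a * (j * a⁻¹ * j⁻¹) := by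
  classical
  letI : Fintype (↥J ⧸ P) := Fintype.ofFinite _
  letI commN : CommGroup ↥N :=
    { (inferInstance : Group ↥N) with
      mul_comm := fun a b => Subtype.ext (hab a a.2 b b.2) }
  let ρ : G → ↥N →* ↥N := fun g =>
    { toFun := fun n => ⟨g * ↑n * g⁻¹, hN.conj_mem _ n.2 g⟩
      map_one' := by ext; simp
      map_mul' := by intro a b; ext; simp [mul_assoc] }
  have ρ_coe : ∀ (g : G) (n : ↥N), ((ρ g n : ↥N) : G) = g * ↑n * g⁻¹ := fun _ _ => rfl
  let A : G → ↥N := fun g => ⟨α g, hmem g⟩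
  have hAcoc : ∀ g h : G, A (g * h) = A g * ρ g (A h) := by
    intro g h; ext; simp only [A, ρ_coe, Subgroup.coe_mul]; exact hcoc g h
  set m := Nat.card (↥J ⧸ P) with hm
  let r : ↥J ⧸ P → ↥J := Quotient.out
  set c : ↥N := ∏ q : ↥J ⧸ P, A ↑(r q) with hc
  have key : ∀ x : ↥J, ρ ↑x c = (A ↑x)⁻¹ ^ m * c := by
    intro x
    have hq : ∀ q : ↥J ⧸ P, ρ ↑x (A ↑(r q)) = (A ↑x)⁻¹ * A ↑(r (x • q)) := by
      intro q
      have hmk : ((r (x • q) : ↥J))⁻¹ * (x * r q) ∈ P := by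
        have h1 : (QuotientGroup.mk (r (x • q)) : ↥J ⧸ P) = x • q := Quotient.out_eq _
        have h2 : (QuotientGroup.mk (x * r q) : ↥J ⧸ P) = x • q := by
          have := MulAction.Quotient.mk_smul_out P x q
          simpa [smul_eq_mul] using this
        exact QuotientGroup.eq.mp (h1.trans h2.symm)
      set pp : ↥J := (r (x • q))⁻¹ * (x * r q) with hpp
      have hxr : (x : ↥J) * r q = r (x • q) * pp := by rw [hpp]; group
      have hcoe : ((x : ↥J) : G) * ↑(r q) = ↑(r (x • q)) * ↑pp := by
        rw [← Subgroup.coe_mul, ← Subgroup.coe_mul, hxr]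
      have h2 : A (↑(r (x • q)) * ↑pp) = A ↑(r (x • q)) := by
        rw [hAcoc]
        have hz : α ↑pp = 1 := hvan pp hmk
        ext
        simp [A, ρ_coe, hz]
      have h1 : A (↑x * ↑(r q)) = A ↑x * ρ ↑x (A ↑(r q)) := hAcoc _ _
      rw [hcoe, h2] at h1
      rw [h1]
      group
    calc ρ (↑x) c = ∏ q : ↥J ⧸ P, ρ ↑x (A ↑(r q)) := map_prod _ _ _
      _ = ∏ q : ↥J ⧸ P, (A ↑x)⁻¹ * A ↑(r (x • q)) := Finset.prod_congr rfl fun q _ => hq q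
      _ = ((A ↑x)⁻¹) ^ m * ∏ q : ↥J ⧸ P, A ↑(r (x • q)) := by
          rw [Finset.prod_mul_distrib, Finset.prod_const, Finset.card_univ, hm, Nat.card_eq_fintype_card]
      _ = (A ↑x)⁻¹ ^ m * c := by
          congr 1
          rw [hc]
          exact Fintype.prod_bijective (x • ·) (MulAction.bijective x)
            (fun q => A ↑(r (x • q))) (fun q => A ↑(r q)) (fun q => rfl)
  refine ⟨↑c, c.2, ?_⟩
  intro j hj
  have h3 : (A j) ^ m = c * (ρ j c)⁻¹ := by
    have := key ⟨j, hj⟩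
    rw [this]
    group
  have h4 := congrArg (fun n : ↥N => (n : G)) h3
  simp only [SubmonoidClass.coe_pow, Subgroup.coe_mul, InvMemClass.coe_inv, ρ_coe] at h4
  calc α j ^ m = (↑c : G) * (j * ↑c * j⁻¹)⁻¹ := h4
    _ = ↑c * (j * (↑c)⁻¹ * j⁻¹) := by group

lemma per_prime {G : Type*} [Group G] [Finite G] {N J J' : Subgroup G} [hN : N.Normal]
    (hab : ∀ a ∈ N, ∀ b ∈ N, a * b = b * a)
    (hJ : N.IsComplement' J) (hJ' : N.IsComplement' J')
    (ψ : G → G)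
    (hψJ' : ∀ g, ψ g ∈ J')
    (hψN : ∀ g, g * (ψ g)⁻¹ ∈ N)
    (hψuniq : ∀ g z, z ∈ J' → g * z⁻¹ ∈ N → ψ g = z)
    (hψmul : ∀ g h : G, ψ (g * h) = ψ g * ψ h)
    {p : ℕ} (hp : p.Prime) (S : Sylow p G)
    (hS : ∀ K K' : Subgroup G, K ≤ S → K' ≤ S →
        Subgroup.IsComplement' ((N ⊓ (S : Subgroup G)).subgroupOf S) (K.subgroupOf S) →
        Subgroup.IsComplement' ((N ⊓ (S : Subgroup G)).subgroupOf S) (K'.subgroupOf S) →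
        ConjugateIn K K') :
    ∃ m : ℕ, ¬ p ∣ m ∧ ∃ a ∈ N, ∀ j ∈ J,
      (j * (ψ j)⁻¹) ^ m = a * (j * a⁻¹ * j⁻¹) := by
  classical
  haveI : Fact p.Prime := ⟨hp⟩
  obtain ⟨P⟩ := (inferInstance : Nonempty (Sylow p ↥J))
  obtain ⟨P'⟩ := (inferInstance : Nonempty (Sylow p ↥J'))
  obtain ⟨g, hgle, hgc⟩ := exists_conj_syl hJ S P
  obtain ⟨g', hgle', hgc'⟩ := exists_conj_syl hJ' S P'
  obtain ⟨h, hh⟩ := hS _ _ hgle hgle' hgc hgc'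
  set Pg : Subgroup G := (P : Subgroup ↥J).map J.subtype with hPgdef
  set Pg' : Subgroup G := (P' : Subgroup ↥J').map J'.subtype with hPg'def
  have hh' := congrArg (Subgroup.map (MulAut.conj g'⁻¹).toMonoidHom) hh
  simp only [map_conj_map_conj] at hh'
  rw [inv_mul_cancel, map_conj_one] at hh'
  set w : G := g'⁻¹ * (h * g) with hwdef
  have hw : Pg = Pg'.map (MulAut.conj w⁻¹).toMonoidHom := by
    have h2 := congrArg (Subgroup.map (MulAut.conj w⁻¹).toMonoidHom) hh'
    simp only [map_conj_map_conj] at h2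
    rw [inv_mul_cancel, map_conj_one] at h2
    exact h2
  -- decompose w⁻¹ = n₀ * x with n₀ ∈ N, x ∈ J'
  obtain ⟨⟨n₀s, xs⟩, hmul, -⟩ := hJ'.existsUnique w⁻¹
  set n₀ : G := ↑n₀s with hn₀def
  set x : G := ↑xs with hxdef
  have hn₀ : n₀ ∈ N := n₀s.2
  have hx : x ∈ J' := xs.2
  have hmul' : n₀ * x = w⁻¹ := hmul
  -- key: ψ is conjugation by n₀⁻¹ on Pg
  have hkey : ∀ y ∈ Pg, ψ y = n₀⁻¹ * y * n₀ := by
    intro y hy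
    have hy' : y ∈ J'.map (MulAut.conj w⁻¹).toMonoidHom := by
      have h3 : Pg ≤ J'.map (MulAut.conj w⁻¹).toMonoidHom := by
        rw [hw]
        exact Subgroup.map_mono (Subgroup.map_subtype_le _)
      exact h3 hy
    obtain ⟨z, hz, hzy⟩ := mem_map_conj.mp hy'
    have hzy' : y = n₀ * (x * z * x⁻¹) * n₀⁻¹ := by
      rw [← hzy, ← hmul']; group
    have hmemJ' : n₀⁻¹ * y * n₀ ∈ J' := by
      rw [hzy']
      have : x * z * x⁻¹ ∈ J' := J'.mul_mem (J'.mul_mem hx hz) (J'.inv_mem hx)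
      simpa [mul_assoc] using this
    refine hψuniq y _ hmemJ' ?_
    have h1 : y * n₀⁻¹ * y⁻¹ ∈ N := hN.conj_mem _ (N.inv_mem hn₀) y
    have : y * (n₀⁻¹ * y * n₀)⁻¹ = (y * n₀⁻¹ * y⁻¹) * n₀ := by group
    rw [this]
    exact N.mul_mem h1 hn₀
  -- the modified cocycle
  set α : G → G := fun g => g * (ψ g)⁻¹ with hα
  have hαN : ∀ g, α g ∈ N := hψN
  have hαcoc : ∀ a b : G, α (a * b) = α a * (a * α b * a⁻¹) := by
    intro a b
    have h1 : α (a * b) = (a * α b * a⁻¹) * α a := by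
      rw [hα]
      simp only [hψmul]
      group
    rw [h1, hab _ (hN.conj_mem _ (hαN b) a) _ (hαN a)]
  set Cb : G → G := fun g => n₀⁻¹ * (g * n₀ * g⁻¹) with hCb
  have hCbN : ∀ g, Cb g ∈ N := fun g => N.mul_mem (N.inv_mem hn₀) (hN.conj_mem _ hn₀ g)
  have hCbcoc : ∀ a b : G, Cb (a * b) = Cb a * (a * Cb b * a⁻¹) := by
    intro a b; rw [hCb]; group
  set β : G → G := fun g => α g * Cb g with hβ
  have hβN : ∀ g, β g ∈ N := fun g => N.mul_mem (hαN g) (hCbN g)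
  have hβcoc : ∀ a b : G, β (a * b) = β a * (a * β b * a⁻¹) := by
    intro a b
    rw [hβ]
    simp only [hαcoc, hCbcoc]
    have hsw : (a * α b * a⁻¹) * Cb a = Cb a * (a * α b * a⁻¹) :=
      hab _ (hN.conj_mem _ (hαN b) a) _ (hCbN a)
    calc α a * (a * α b * a⁻¹) * (Cb a * (a * Cb b * a⁻¹))
        = α a * ((a * α b * a⁻¹) * Cb a) * (a * Cb b * a⁻¹) := by group
      _ = α a * (Cb a * (a * α b * a⁻¹)) * (a * Cb b * a⁻¹) := by rw [hsw]
      _ = α a * Cb a * (a * (α b * Cb b) * a⁻¹) := by group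
  have hβvan : ∀ y : ↥J, y ∈ (P : Subgroup ↥J) → β ↑y = 1 := by
    intro y hyP
    have hyPg : (y : G) ∈ Pg := ⟨y, hyP, rfl⟩
    have := hkey _ hyPg
    rw [hβ]
    simp only [hα, hCb, this]
    group
  obtain ⟨a'', ha''N, ha''⟩ := transfer_coboundary hab (P : Subgroup ↥J) β hβN hβcoc hβvan
  set m : ℕ := Nat.card (↥J ⧸ (P : Subgroup ↥J)) with hmdef
  have hpm : ¬ p ∣ m := by
    have : m = (P : Subgroup ↥J).index := rfl
    rw [this]
    exact P.not_dvd_index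
  refine ⟨m, hpm, a'' * n₀ ^ m, N.mul_mem ha''N (N.pow_mem hn₀ m), ?_⟩
  intro j hj
  have hβj := ha'' j hj
  -- α j = β j * (Cb j)⁻¹, all in N
  have hcomm : Commute (α j) (Cb j) := hab _ (hαN j) _ (hCbN j)
  have hαm : α j ^ m * Cb j ^ m = β j ^ m := (hcomm.mul_pow m).symm
  -- (Cb j)⁻¹ ^ m = n₀^m * (j * n₀⁻¹^m * j⁻¹) ... rework:
  have hCbpow : Cb j ^ m = n₀⁻¹ ^ m * (j * n₀ * j⁻¹) ^ m := by
    have hc2 : Commute (n₀⁻¹) (j * n₀ * j⁻¹) :=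
      hab _ (N.inv_mem hn₀) _ (hN.conj_mem _ hn₀ j)
    exact hc2.mul_pow m
  have hCbinv : (Cb j ^ m)⁻¹ = n₀ ^ m * (j * (n₀ ^ m)⁻¹ * j⁻¹) := by
    have h1 : (n₀⁻¹ ^ m * (j * n₀ * j⁻¹) ^ m)⁻¹ = (j * (n₀ ^ m)⁻¹ * j⁻¹) * n₀ ^ m := by
      rw [inv_pow, conj_pow]
      group
    rw [hCbpow, h1,
      hab _ (hN.conj_mem _ (N.inv_mem (N.pow_mem hn₀ m)) j) _ (N.pow_mem hn₀ m)]
  show α j ^ m = (a'' * n₀ ^ m) * (j * (a'' * n₀ ^ m)⁻¹ * j⁻¹)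
  calc α j ^ m = β j ^ m * (Cb j ^ m)⁻¹ := eq_mul_inv_of_mul_eq hαm
    _ = (a'' * (j * a''⁻¹ * j⁻¹)) * (n₀ ^ m * (j * (n₀ ^ m)⁻¹ * j⁻¹)) := by rw [hβj, hCbinv]
    _ = (a'' * n₀ ^ m) * (j * (a'' * n₀ ^ m)⁻¹ * j⁻¹) := cob_mul hab ha''N (N.pow_mem hn₀ m) j

end GaschuetzAux

open GaschuetzAux in
/-- **Corollary (abelian case).**  Let `G` be a finite group splitting over a normal
abelian subgroup `N`.  If for each prime `p` there is a Sylow `p`-subgroup `S` of `G`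
such that any two complements of `N ∩ S` in `S` are conjugate in `G`, then any two
complements of `N` in `G` are conjugate in `G`. -/
theorem stmt2 {G : Type*} [Group G] [Finite G] (N : Subgroup G) [N.Normal]
    (hab : ∀ a ∈ N, ∀ b ∈ N, a * b = b * a)
    (hsplit : ∃ J : Subgroup G, Subgroup.IsComplement' N J)
    (hsyl : ∀ p : ℕ, p.Prime → ∃ S : Sylow p G,
      ∀ K K' : Subgroup G, K ≤ S → K' ≤ S →
        Subgroup.IsComplement' ((N ⊓ S).subgroupOf S) (K.subgroupOf S) →
        Subgroup.IsComplement' ((N ⊓ S).subgroupOf S) (K'.subgroupOf S) →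
        ConjugateIn K K') :
    ∀ J J' : Subgroup G, Subgroup.IsComplement' N J → Subgroup.IsComplement' N J' →
      ConjugateIn J J' := by
  classical
  intro J J' hJ hJ'
  have hN : N.Normal := inferInstance
  -- construct the retraction ψ onto J'
  have hdec : ∀ g : G, ∃ z, z ∈ J' ∧ g * z⁻¹ ∈ N := by
    intro g
    obtain ⟨⟨ns, zs⟩, hmul, -⟩ := hJ'.existsUnique g
    refine ⟨↑zs, zs.2, ?_⟩
    have : (↑ns * ↑zs : G) * (↑zs : G)⁻¹ = ↑ns := by group
    rw [← hmul, this]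
    exact ns.2
  choose ψ hψJ' hψN using hdec
  have hψuniq : ∀ g z, z ∈ J' → g * z⁻¹ ∈ N → ψ g = z := by
    intro g z hz hgz
    have h1 : ψ g * z⁻¹ ∈ N := by
      have : ψ g * z⁻¹ = (g * (ψ g)⁻¹)⁻¹ * (g * z⁻¹) := by group
      rw [this]
      exact N.mul_mem (N.inv_mem (hψN g)) hgz
    have h2 : ψ g * z⁻¹ ∈ J' := J'.mul_mem (hψJ' g) (J'.inv_mem hz)
    have := Subgroup.disjoint_def.mp hJ'.disjoint h1 h2
    exact mul_inv_eq_one.mp this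
  have hψmul : ∀ g h : G, ψ (g * h) = ψ g * ψ h := by
    intro g h
    refine hψuniq _ _ (J'.mul_mem (hψJ' g) (hψJ' h)) ?_
    have : (g * h) * (ψ g * ψ h)⁻¹ = (g * (h * (ψ h)⁻¹) * g⁻¹) * (g * (ψ g)⁻¹) := by group
    rw [this]
    exact N.mul_mem (hN.conj_mem _ (hψN h) g) (hψN g)
  have hψid : ∀ z ∈ J', ψ z = z := fun z hz => hψuniq z z hz (by simpa using N.one_mem)
  have hψker : ∀ n ∈ N, ψ n = 1 := fun n hn => hψuniq n 1 J'.one_mem (by simpa using hn)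
  -- the subgroup of good exponents
  let M : AddSubgroup ℤ :=
    { carrier := {m : ℤ | ∃ a ∈ N, ∀ j ∈ J, (j * (ψ j)⁻¹) ^ m = a * (j * a⁻¹ * j⁻¹)}
      zero_mem' := ⟨1, N.one_mem, by intro j hj; simp⟩
      add_mem' := by
        rintro m₁ m₂ ⟨a, haN, ha⟩ ⟨b, hbN, hb⟩
        exact ⟨a * b, N.mul_mem haN hbN, fun j hj => by
          rw [zpow_add, ha j hj, hb j hj, cob_mul hab haN hbN j]⟩
      neg_mem' := by
        rintro m ⟨a, haN, ha⟩
        refine ⟨a⁻¹, N.inv_mem haN, fun j hj => ?_⟩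
        rw [zpow_neg, ha j hj]
        have hsw : (j * a * j⁻¹) * a⁻¹ = a⁻¹ * (j * a * j⁻¹) :=
          hab _ (hN.conj_mem _ haN j) _ (N.inv_mem haN)
        calc (a * (j * a⁻¹ * j⁻¹))⁻¹ = (j * a * j⁻¹) * a⁻¹ := by group
          _ = a⁻¹ * (j * a * j⁻¹) := hsw
          _ = a⁻¹ * (j * (a⁻¹)⁻¹ * j⁻¹) := by group }
  have hmemM : ∀ m : ℤ, m ∈ M ↔
      ∃ a ∈ N, ∀ j ∈ J, (j * (ψ j)⁻¹) ^ m = a * (j * a⁻¹ * j⁻¹) := fun m => Iff.rfl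
  -- card N ∈ M
  have heM : ((Nat.card ↥N : ℤ)) ∈ M := by
    refine ⟨1, N.one_mem, fun j hj => ?_⟩
    have h1 : ((⟨j * (ψ j)⁻¹, hψN j⟩ : ↥N)) ^ (Nat.card ↥N) = 1 := pow_card_eq_one'
    have h2 : (j * (ψ j)⁻¹) ^ (Nat.card ↥N) = 1 := by
      have h3 := congrArg (fun n : ↥N => (n : G)) h1
      simp only [SubmonoidClass.coe_pow, OneMemClass.coe_one] at h3
      exact h3
    rw [zpow_natCast, h2]
    simp
  -- per-prime membership
  have hprime : ∀ p : ℕ, p.Prime → ∃ m : ℕ, ¬ p ∣ m ∧ (m : ℤ) ∈ M := by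
    intro p hp
    obtain ⟨S, hS⟩ := hsyl p hp
    obtain ⟨m, hpm, a, haN, ha⟩ :=
      per_prime hab hJ hJ' ψ hψJ' hψN hψuniq hψmul hp S hS
    refine ⟨m, hpm, a, haN, fun j hj => ?_⟩
    rw [zpow_natCast]
    exact ha j hj
  -- conclude 1 ∈ M
  have h1M : (1 : ℤ) ∈ M := by
    obtain ⟨d, hd⟩ := Int.subgroup_cyclic M
    have hdvd : ∀ x : ℤ, x ∈ M ↔ d ∣ x := by
      intro x
      rw [hd, AddSubgroup.mem_closure_singleton]
      constructor
      · rintro ⟨n, rfl⟩; exact ⟨n, by rw [mul_comm]; rfl⟩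
      · rintro ⟨n, rfl⟩; exact ⟨n, by rw [mul_comm]; rfl⟩
    set n : ℕ := d.natAbs with hn
    have hde : d ∣ (Nat.card ↥N : ℤ) := (hdvd _).mp heM
    have hn0 : n ≠ 0 := by
      intro h0
      have : d = 0 := Int.natAbs_eq_zero.mp h0
      rw [this] at hde
      have := zero_dvd_iff.mp hde
      have hNpos : (0 : ℤ) < (Nat.card ↥N : ℤ) := by
        exact_mod_cast Nat.card_pos
      omega
    have hn1 : n = 1 := by
      by_contra hne
      have hpn : n.minFac.Prime := Nat.minFac_prime hne
      obtain ⟨m, hpm, hmM⟩ := hprime n.minFac hpn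
      have hdm : d ∣ (m : ℤ) := (hdvd _).mp hmM
      have hnm : (n : ℤ) ∣ (m : ℤ) := (Int.natAbs_dvd).mpr hdm
      have : n ∣ m := Int.natCast_dvd_natCast.mp hnm
      exact hpm ((Nat.minFac_dvd n).trans this)
    refine (hdvd 1).mpr ?_
    have : (n : ℤ) ∣ 1 := by rw [hn1]; exact one_dvd 1
    exact (Int.natAbs_dvd).mp this
  -- extract the conjugating element
  obtain ⟨a, haN, ha⟩ := h1M
  have hψconj : ∀ j ∈ J, ψ j = a⁻¹ * j * a := by
    intro j hj
    have h1 : j * (ψ j)⁻¹ = a * (j * a⁻¹ * j⁻¹) := by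
      have := ha j hj
      rwa [zpow_one] at this
    have hsw : a * (j * a⁻¹ * j⁻¹) = (j * a⁻¹ * j⁻¹) * a :=
      hab _ haN _ (hN.conj_mem _ (N.inv_mem haN) j)
    rw [hsw] at h1
    have : (ψ j)⁻¹ = a⁻¹ * j⁻¹ * a := by
      calc (ψ j)⁻¹ = j⁻¹ * (j * (ψ j)⁻¹) := by group
        _ = j⁻¹ * ((j * a⁻¹ * j⁻¹) * a) := by rw [h1]
        _ = a⁻¹ * j⁻¹ * a := by group
    calc ψ j = ((ψ j)⁻¹)⁻¹ := by group
      _ = (a⁻¹ * j⁻¹ * a)⁻¹ := by rw [this]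
      _ = a⁻¹ * j * a := by group
  refine ⟨a⁻¹, ?_⟩
  ext x
  rw [mem_map_conj]
  constructor
  · rintro ⟨y, hy, rfl⟩
    have h2 : a⁻¹ * y * a⁻¹⁻¹ = ψ y := by rw [hψconj y hy]; group
    rw [h2]
    exact hψJ' y
  · intro hx
    obtain ⟨⟨ns, js⟩, hmul, -⟩ := hJ.existsUnique x
    have hjsJ : (js : G) ∈ J := js.2
    refine ⟨js, hjsJ, ?_⟩
    have h1 : ψ x = x := hψid x hx
    have h2 : ψ x = ψ ↑js := by
      rw [← hmul, hψmul, hψker _ ns.2, one_mul]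
    rw [← h2.symm.trans h1, hψconj _ hjsJ]
    group
end

section
/- Let N be a finite nilpotent group on which a finite group J acts by automorphisms, and let N ≅ ⊕_p N_p be its decomposition into Sylow subgroups (each N_p is J-invariant since characteristic). Then the natural projections N → N_p induce a bijection of pointed sets H¹(J, N) ≅ ⊕_p H¹(J, N_p). -/
section Cohomology

variable {J N : Type*} [Group J] [Group N] [MulDistribMulAction J N]

/-- Crossed homomorphism (1-cocycle) `φ : J → N`:  `φ(jj') = φ(j)·φ(j')^{j⁻¹}`,
where `n^γ = γ⁻¹ • n`. -/
def IsCocycle (φ : J → N) : Prop :=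
  ∀ j j' : J, φ (j * j') = φ j * j • φ j'

/-- Cocycle condition restricted to a subgroup `K ≤ J`. -/
def IsCocycleOn (K : Subgroup J) (φ : J → N) : Prop :=
  ∀ k ∈ K, ∀ k' ∈ K, φ (k * k') = φ k * k • φ k'

/-- `φ` and `φ'` are cohomologous: `φ'(j) = n⁻¹·φ(j)·n^{j⁻¹}` for some `n ∈ N`. -/
def Cohomologous (φ φ' : J → N) : Prop :=
  ∃ n : N, ∀ j : J, φ' j = n⁻¹ * φ j * j • n

/-- `φ` and `φ'` are cohomologous as cocycles on the subgroup `K`. -/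
def CohomologousOn (K : Subgroup J) (φ φ' : J → N) : Prop :=
  ∃ n : N, ∀ k ∈ K, φ' k = n⁻¹ * φ k * k • n

/-- The twist `φ^j(x) = φ(x^{j⁻¹})^j = j⁻¹ • φ(j x j⁻¹)`. -/
def cocycleTwist (j : J) (φ : J → N) : J → N :=
  fun x => j⁻¹ • φ (j * x * j⁻¹)

/-- A cocycle on `K ≤ J` is `J`-invariant if for every `j ∈ J` the restrictions of
`φ` and `φ^j` to `K ∩ K^j` are cohomologous, where `K^j = j⁻¹Kj`. -/
def IsInvariantOn (K : Subgroup J) (φ : J → N) : Prop :=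
  ∀ j : J, CohomologousOn (K ⊓ K.map (MulAut.conj j⁻¹).toMonoidHom) φ (cocycleTwist j φ)

end Cohomology
/-- If a finite group `J` acts on a finite nilpotent group `N`, written as the direct
product `N = ⊕_p N_p` of its Sylow subgroups (each `J`-invariant), then the natural
projections `N → N_p` induce a bijection `H¹(J,N) ≅ ⊕_p H¹(J,N_p)` (stated at the
level of cocycles:  projections of cocycles are cocycles, joint injectivity up to
cohomology, and surjectivity). -/
theorem stmt11 {J : Type*} [Group J] [Finite J] {ι : Type*} [Fintype ι]
    (p : ι → ℕ) (hp : ∀ i, (p i).Prime) (hinj : Function.Injective p)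
    (N : ι → Type*) [∀ i, Group (N i)] [∀ i, Finite (N i)]
    (hpgrp : ∀ i, IsPGroup (p i) (N i))
    [∀ i, MulDistribMulAction J (N i)] :
    (∀ φ : J → (∀ i, N i), IsCocycle φ → ∀ i, IsCocycle (fun j => φ j i)) ∧
      (∀ φ φ' : J → (∀ i, N i), IsCocycle φ → IsCocycle φ' →
        (∀ i, Cohomologous (fun j => φ j i) (fun j => φ' j i)) → Cohomologous φ φ') ∧
      (∀ ψ : ∀ i, J → N i, (∀ i, IsCocycle (ψ i)) →
        ∃ φ : J → (∀ i, N i), IsCocycle φ ∧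
          ∀ i, Cohomologous (fun j => φ j i) (ψ i)) := by
  refine ⟨fun φ hφ i j j' => ?_, fun φ φ' hφ hφ' h => ?_, fun ψ hψ => ?_⟩
  · have := congrFun (hφ j j') i
    simpa using this
  · choose n hn using h
    exact ⟨fun i => n i, fun j => funext fun i => by simpa using hn i j⟩
  · refine ⟨fun j i => ψ i j, fun j j' => funext fun i => by simpa using hψ i j j',
      fun i => ⟨1, fun j => by simp⟩⟩
end

section
/- Suppose a finite group J = Q ⋊ M acts by automorphisms on a finite group N such that Q centralizes N (i.e., N^Q = N) and gcd(|Q|,|N|) = 1. Then the restriction map res^J_M : H¹(J,N) → H¹(M,N) is a bijection; surjectivity is witnessed by extending φ ∈ Z¹(M,N) to φ̃(qm) = φ(m). -/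
/-- If `J = Q ⋊ M` acts on a finite group `N` with `Q` acting trivially and
`gcd(|Q|,|N|) = 1`, then `res^J_M : H¹(J,N) → H¹(M,N)` is a bijection; surjectivity
is witnessed by extending `φ ∈ Z¹(M,N)` to `φ̃(qm) = φ(m)`. -/
theorem stmt13 {J N : Type*} [Group J] [Group N] [Finite J] [Finite N]
    [MulDistribMulAction J N]
    (Q M : Subgroup J) [Q.Normal] (hcompl : Subgroup.IsComplement' Q M)
    (htriv : ∀ q ∈ Q, ∀ n : N, q • n = n)
    (hcop : Nat.Coprime (Nat.card Q) (Nat.card N)) :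
    (∀ φ φ' : J → N, IsCocycle φ → IsCocycle φ' →
        CohomologousOn M φ φ' → Cohomologous φ φ') ∧
      (∀ ψ : J → N, IsCocycleOn M ψ →
        ∃ φ : J → N, IsCocycle φ ∧ ∀ q ∈ Q, ∀ m ∈ M, φ (q * m) = ψ m) := by

  classical
  -- Every cocycle vanishes on Q
  have key : ∀ φ : J → N, IsCocycle φ → ∀ q ∈ Q, φ q = 1 := by
    intro φ hφ q hq
    have h1 : φ 1 = 1 := by
      have := hφ 1 1
      simpa using this
    let f : Q →* N :=
      { toFun := fun x => φ x
        map_one' := h1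
        map_mul' := by
          intro a b
          show φ ((a * b : Q) : J) = φ (a : J) * φ (b : J)
          rw [Subgroup.coe_mul, hφ a b, htriv a a.2] }
    have hd1 : orderOf (φ q) ∣ Nat.card Q := by
      have : orderOf (f ⟨q, hq⟩) ∣ orderOf (⟨q, hq⟩ : Q) := orderOf_map_dvd f _
      exact this.trans (orderOf_dvd_natCard _)
    have hd2 : orderOf (φ q) ∣ Nat.card N := orderOf_dvd_natCard _
    have : orderOf (φ q) ∣ 1 := hcop ▸ Nat.dvd_gcd hd1 hd2
    exact orderOf_eq_one_iff.mp (Nat.dvd_one.mp this)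
  constructor
  · rintro φ φ' hφ hφ' ⟨n, hn⟩
    refine ⟨n, fun j => ?_⟩
    obtain ⟨⟨q, m⟩, hx⟩ := (hcompl.existsUnique j).exists
    have hq : (q : J) ∈ Q := q.2
    have hm : (m : J) ∈ M := m.2
    subst hx
    have e1 : φ ((q : J) * m) = φ m := by
      rw [hφ, key φ hφ q hq, htriv q hq, one_mul]
    have e1' : φ' ((q : J) * m) = φ' m := by
      rw [hφ', key φ' hφ' q hq, htriv q hq, one_mul]
    have e2 : ((q : J) * m) • n = (m : J) • n := by
      rw [mul_smul, htriv q hq]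
    rw [e1, e1', e2, hn m hm]
  · intro ψ hψ
    choose d hd using fun j => (hcompl.existsUnique j).exists
    have huniq : ∀ (q : J) (hq : q ∈ Q) (m : J) (hm : m ∈ M),
        d (q * m) = (⟨q, hq⟩, ⟨m, hm⟩) := by
      intro q hq m hm
      exact (hcompl.existsUnique (q * m)).unique (hd _) rfl
    refine ⟨fun j => ψ ((d j).2 : J), ?_, ?_⟩
    · intro j j'
      obtain ⟨⟨q, m⟩, hx⟩ := (hcompl.existsUnique j).exists
      obtain ⟨⟨q', m'⟩, hx'⟩ := (hcompl.existsUnique j').exists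
      have hq : (q : J) ∈ Q := q.2
      have hm : (m : J) ∈ M := m.2
      have hq' : (q' : J) ∈ Q := q'.2
      have hm' : (m' : J) ∈ M := m'.2
      subst hx; subst hx'
      have hQprod : (q : J) * ((m : J) * q' * (m : J)⁻¹) ∈ Q :=
        Q.mul_mem hq (Subgroup.Normal.conj_mem ‹Q.Normal› _ hq' _)
      have hMprod : (m : J) * m' ∈ M := M.mul_mem hm hm'
      have hprod : (q : J) * m * ((q' : J) * m') =
          ((q : J) * ((m : J) * q' * (m : J)⁻¹)) * ((m : J) * m') := by group
      have hdj : d ((q : J) * m) = (⟨q, hq⟩, ⟨m, hm⟩) := by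
        simpa using huniq q hq m hm
      have hdj' : d ((q' : J) * m') = (⟨q', hq'⟩, ⟨m', hm'⟩) := by
        simpa using huniq q' hq' m' hm'
      have hdjj : d ((q : J) * m * ((q' : J) * m')) =
          (⟨_, hQprod⟩, ⟨_, hMprod⟩) := by
        rw [hprod]; exact huniq _ hQprod _ hMprod
      show ψ ((d ((q : J) * m * ((q' : J) * m'))).2 : J) =
        ψ ((d ((q : J) * m)).2 : J) * ((q : J) * m) • ψ ((d ((q' : J) * m')).2 : J)
      rw [hdj, hdj', hdjj]
      show ψ ((m : J) * m') = ψ m * ((q : J) * m) • ψ (m' : J)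
      rw [hψ m hm m' hm', mul_smul, htriv q hq]
    · intro q hq m hm
      show ψ ((d (q * m)).2 : J) = ψ m
      rw [huniq q hq m hm]
end

section
/- Let J = J_p ⋊ M be a finite group with J_p a normal Sylow p-subgroup and M a p-complement, acting by automorphisms on a finite p-group N. If φ ∈ Z¹(J_p, N) is M-invariant (for all m ∈ M, φ^m is cohomologous to φ as crossed homomorphisms J_p → N), then φ extends, up to cohomology, to a crossed homomorphism on J: the map φ̃(hm) = φ(h) lies in Z¹(J,N) when φ is strictly M-equivariant (φ(h^{m^{-1}})^m = φ(h)), and in general every J-invariant class in H¹(J_p,N) is in the image of res^J_{J_p}. -/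
section AuxStmt14

variable {J N : Type*} [Group J] [Group N] [MulDistribMulAction J N]

lemma IsCocycleOn.map_one {K : Subgroup J} {φ : J → N} (h : IsCocycleOn K φ) : φ 1 = 1 := by
  have h1 := h 1 K.one_mem 1 K.one_mem
  rw [one_mul, one_smul] at h1
  exact (left_eq_mul.mp h1)

lemma IsCocycleOn.map_inv {K : Subgroup J} {φ : J → N} (h : IsCocycleOn K φ) {k : J}
    (hk : k ∈ K) : φ k⁻¹ = k⁻¹ • (φ k)⁻¹ := by
  have h1 := h k hk k⁻¹ (inv_mem hk)
  rw [mul_inv_cancel, h.map_one] at h1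
  have h2 : k • φ k⁻¹ = (φ k)⁻¹ := (inv_eq_of_mul_eq_one_right h1.symm).symm
  rw [← h2, inv_smul_smul]

/-- Part 1: a strictly `M`-equivariant cocycle on `Jp` extends to `J`. -/
theorem stmt14_part1 (Jp M : Subgroup J) (hJpN : Jp.Normal)
    (hcompl : Subgroup.IsComplement' Jp M)
    (φ : J → N) (hφ : IsCocycleOn Jp φ)
    (heq : ∀ m ∈ M, ∀ h ∈ Jp, cocycleTwist m φ h = φ h) :
    ∃ ψ : J → N, IsCocycle ψ ∧ (∀ h ∈ Jp, ∀ m ∈ M, ψ (h * m) = φ h) := by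
  classical
  have heq' : ∀ m ∈ M, ∀ x ∈ Jp, φ (m * x * m⁻¹) = m • φ x := by
    intro m hm x hx
    have h1 := heq m hm x hx
    have h2 : m • (cocycleTwist m φ x) = φ (m * x * m⁻¹) := by
      unfold cocycleTwist
      rw [smul_inv_smul]
    rw [← h2, h1]
  set e := hcompl.equiv with he
  have hdec : ∀ (h : J) (hh : h ∈ Jp) (m : J) (hm : m ∈ M),
      e (h * m) = (⟨h, hh⟩, ⟨m, hm⟩) := by
    intro h hh m hm
    have h1 : h * m = e.symm (⟨h, hh⟩, ⟨m, hm⟩) := by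
      rw [he, Subgroup.IsComplement.equiv_symm_apply]
    rw [h1, Equiv.apply_symm_apply]
  refine ⟨fun j => φ ((e j).1 : J), ?_, ?_⟩
  · intro j j'
    rcases q : e j with ⟨⟨h, hh⟩, ⟨m, hm⟩⟩
    rcases q' : e j' with ⟨⟨h', hh'⟩, ⟨m', hm'⟩⟩
    have hj : h * m = j := by
      have := hcompl.equiv_fst_mul_equiv_snd j
      rwa [← he, q] at this
    have hj' : h' * m' = j' := by
      have := hcompl.equiv_fst_mul_equiv_snd j'
      rwa [← he, q'] at this
    have hconj : m * h' * m⁻¹ ∈ Jp := hJpN.conj_mem h' hh' m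
    have hmem1 : h * (m * h' * m⁻¹) ∈ Jp := mul_mem hh hconj
    have hmem2 : m * m' ∈ M := mul_mem hm hm'
    have hprod : j * j' = (h * (m * h' * m⁻¹)) * (m * m') := by
      rw [← hj, ← hj']; group
    show φ ((e (j * j')).1 : J) = φ ((e j).1 : J) * j • φ ((e j').1 : J)
    have hL : φ ((e (j * j')).1 : J) = φ (h * (m * h' * m⁻¹)) := by
      rw [hprod, hdec _ hmem1 _ hmem2]
    rw [hL, q, q', hφ h hh _ hconj, heq' m hm h' hh', smul_smul, hj]
  · intro h hh m hm
    simp only [hdec h hh m hm]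

/-- Part 2, main construction. -/
theorem stmt14_part2 [Finite J] [Finite N] {p : ℕ} (hp : p.Prime) (hN : IsPGroup p N)
    (Jp : Sylow p J) [hJpN : (Jp : Subgroup J).Normal]
    (φ : J → N) (hφ : IsCocycleOn (Jp : Subgroup J) φ)
    (hinv : IsInvariantOn (Jp : Subgroup J) φ) :
    ∃ ψ : J → N, IsCocycle ψ ∧ CohomologousOn (Jp : Subgroup J) ψ φ := by
  classical
  haveI : Fact p.Prime := ⟨hp⟩
  set α : J →* MulAut N := MulDistribMulAction.toMulAut J N with hα
  have hact : ∀ (j : J) (n : N), α j n = j • n := fun j n => rfl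
  haveI : Finite (N ⋊[α] J) := by
    apply Finite.of_injective (fun x : N ⋊[α] J => (x.left, x.right))
    rintro ⟨a, b⟩ ⟨c, d⟩ hx
    simp only [Prod.mk.injEq] at hx
    exact SemidirectProduct.ext hx.1 hx.2
  -- The subgroup `H` of the semidirect product corresponding to `φ`
  let H : Subgroup (N ⋊[α] J) :=
  { carrier := {x | x.right ∈ (Jp : Subgroup J) ∧ x.left = φ x.right}
    one_mem' := ⟨one_mem _, by simp [hφ.map_one]⟩
    mul_mem' := by
      rintro x y ⟨hx1, hx2⟩ ⟨hy1, hy2⟩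
      refine ⟨mul_mem hx1 hy1, ?_⟩
      show (x * y).left = φ (x * y).right
      rw [SemidirectProduct.mul_left, SemidirectProduct.mul_right,
        hφ x.right hx1 y.right hy1, hx2, hy2, hact]
    inv_mem' := by
      rintro x ⟨hx1, hx2⟩
      refine ⟨inv_mem hx1, ?_⟩
      show x⁻¹.left = φ x⁻¹.right
      rw [SemidirectProduct.inv_left, SemidirectProduct.inv_right,
        hφ.map_inv hx1, hx2, hact] }
  have hmemH : ∀ x : N ⋊[α] J, x ∈ H ↔ x.right ∈ (Jp : Subgroup J) ∧ x.left = φ x.right :=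
    fun x => Iff.rfl
  -- choose the cohomology data from the invariance
  choose nn hnn using hinv
  have htw : ∀ (j k : J), k ∈ (Jp : Subgroup J) →
      j⁻¹ • φ (j * k * j⁻¹) = (nn j)⁻¹ * φ k * k • nn j := by
    intro j k hk
    refine hnn j k ⟨hk, ⟨j * k * j⁻¹, hJpN.conj_mem k hk j, ?_⟩⟩
    show j⁻¹ * (j * k * j⁻¹) * j⁻¹⁻¹ = k
    group
  -- the distinguished elements of the normalizer of `H`
  let r : J → N ⋊[α] J := fun j => ⟨j • (nn j)⁻¹, j⟩
  have h3 : ∀ j : J, j⁻¹ • (j • (nn j)⁻¹)⁻¹ = nn j := by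
    intro j
    rw [smul_inv', inv_smul_smul, inv_inv]
  have conj1 : ∀ (j k : J), k ∈ (Jp : Subgroup J) →
      r j * ⟨φ k, k⟩ * (r j)⁻¹ = ⟨φ (j * k * j⁻¹), j * k * j⁻¹⟩ := by
    intro j k hk
    have h1 : φ (j * k * j⁻¹) = j • (nn j)⁻¹ * j • φ k * (j * k) • nn j := by
      have h2 : φ (j * k * j⁻¹) = j • ((nn j)⁻¹ * φ k * k • nn j) := by
        rw [← htw j k hk, smul_inv_smul]
      rw [h2, smul_mul', smul_mul', smul_smul]
    refine SemidirectProduct.ext ?_ rfl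
    simp only [r, SemidirectProduct.mul_left, SemidirectProduct.mul_right,
      SemidirectProduct.inv_left, SemidirectProduct.inv_right, hact, h3]
    exact h1.symm
  have conj2 : ∀ (j k : J), k ∈ (Jp : Subgroup J) →
      (r j)⁻¹ * ⟨φ k, k⟩ * r j = ⟨φ (j⁻¹ * k * j), j⁻¹ * k * j⟩ := by
    intro j k hk
    have hk' : j⁻¹ * k * j ∈ (Jp : Subgroup J) := by
      have := hJpN.conj_mem k hk j⁻¹
      simpa using this
    have h1 : j⁻¹ • φ k = (nn j)⁻¹ * φ (j⁻¹ * k * j) * (j⁻¹ * k * j) • nn j := by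
      have h2 := htw j (j⁻¹ * k * j) hk'
      have e1 : j * (j⁻¹ * k * j) * j⁻¹ = k := by group
      rwa [e1] at h2
    refine SemidirectProduct.ext ?_ rfl
    simp only [r, SemidirectProduct.mul_left, SemidirectProduct.mul_right,
      SemidirectProduct.inv_left, SemidirectProduct.inv_right, hact, h3]
    rw [h1, smul_smul, smul_inv']
    group
  -- `r j` normalizes `H`
  have hrmem : ∀ j : J, r j ∈ Subgroup.normalizer (H : Set (N ⋊[α] J)) := by
    intro j
    rw [Subgroup.mem_normalizer_iff]
    intro x
    constructor
    · rintro ⟨hx1, hx2⟩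
      have hx : x = ⟨φ x.right, x.right⟩ := SemidirectProduct.ext hx2 rfl
      rw [hx, conj1 j x.right hx1]
      exact ⟨hJpN.conj_mem x.right hx1 j, rfl⟩
    · rintro ⟨hy1, hy2⟩
      have hyy : r j * x * (r j)⁻¹ =
          ⟨φ ((r j * x * (r j)⁻¹).right), (r j * x * (r j)⁻¹).right⟩ :=
        SemidirectProduct.ext hy2 rfl
      have hxeq : x = (r j)⁻¹ * (r j * x * (r j)⁻¹) * r j := by group
      rw [hxeq, hyy, conj2 j _ hy1]
      refine ⟨?_, rfl⟩
      have := hJpN.conj_mem _ hy1 j⁻¹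
      simpa using this
  set R := Subgroup.normalizer (H : Set (N ⋊[α] J)) with hR
  set P : Subgroup (N ⋊[α] J) :=
    Subgroup.comap (SemidirectProduct.rightHom) (Jp : Subgroup J) with hP
  haveI hPn : P.Normal := Subgroup.Normal.comap inferInstance _
  have hkerP : IsPGroup p (SemidirectProduct.rightHom (N := N) (G := J) (φ := α)).ker := by
    rw [← SemidirectProduct.range_inl_eq_ker_rightHom]
    exact hN.of_surjective SemidirectProduct.inl.rangeRestrict
      SemidirectProduct.inl.rangeRestrict_surjective
  have hPp : IsPGroup p P := Jp.isPGroup'.comap_of_ker_isPGroup _ hkerP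
  have hQp : IsPGroup p (P.subgroupOf R) := hPp.comap_subtype
  haveI : (P.subgroupOf R).Normal := Subgroup.normal_subgroupOf
  have hindex : ¬ p ∣ (P.subgroupOf R).index := by
    intro hdvd
    have h1 : (P.subgroupOf R).index ∣ P.index :=
      (Subgroup.relIndex_dvd_index_of_normal P R : P.relIndex R ∣ P.index)
    have h2 : P.index = (Jp : Subgroup J).index :=
      Subgroup.index_comap_of_surjective _ SemidirectProduct.rightHom_surjective
    exact (Sylow.not_dvd_index Jp) (h2 ▸ hdvd.trans h1)
  obtain ⟨a, ha⟩ := hQp.exists_card_eq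
  have hcop : Nat.Coprime (Nat.card (P.subgroupOf R)) (P.subgroupOf R).index := by
    rw [ha]
    exact Nat.Coprime.pow_left a ((Nat.Prime.coprime_iff_not_dvd hp).mpr hindex)
  obtain ⟨M₁, hM₁⟩ := Subgroup.exists_right_complement'_of_coprime hcop
  have hHR : H ≤ R := Subgroup.le_normalizer
  haveI hHnorm : (H.subgroupOf R).Normal := by
    rw [hR]; exact Subgroup.normal_in_normalizer
  set KG : Subgroup (N ⋊[α] J) := ((H.subgroupOf R) ⊔ M₁).map R.subtype with hKG
  have hHK : H ≤ KG := by
    intro z hz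
    exact ⟨⟨z, hHR hz⟩, Subgroup.mem_sup_left (Subgroup.mem_subgroupOf.mpr hz), rfl⟩
  have claimA : ∀ x ∈ KG, SemidirectProduct.rightHom x = 1 → x = 1 := by
    rintro x ⟨y, hy, rfl⟩ hx1
    have hy' : (y : ↥R) ∈ (↑(H.subgroupOf R ⊔ M₁) : Set ↥R) := hy
    rw [Subgroup.normal_mul] at hy'
    obtain ⟨h, hh, m, hm, rfl⟩ := hy'
    have hhH : ((h : ↥R) : N ⋊[α] J) ∈ H := Subgroup.mem_subgroupOf.mp hh
    have hsplit : R.subtype (h * m) = ((h : ↥R) : N ⋊[α] J) * ((m : ↥R) : N ⋊[α] J) := rfl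
    have hrh : SemidirectProduct.rightHom ((h : ↥R) : N ⋊[α] J) ∈ (Jp : Subgroup J) := hhH.1
    have hrm : SemidirectProduct.rightHom ((m : ↥R) : N ⋊[α] J) ∈ (Jp : Subgroup J) := by
      have h4 : SemidirectProduct.rightHom ((h : ↥R) : N ⋊[α] J) *
          SemidirectProduct.rightHom ((m : ↥R) : N ⋊[α] J) = 1 := by
        rw [← map_mul, ← hsplit]; exact hx1
      have h5 : SemidirectProduct.rightHom ((m : ↥R) : N ⋊[α] J) =
          (SemidirectProduct.rightHom ((h : ↥R) : N ⋊[α] J))⁻¹ :=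
        eq_inv_of_mul_eq_one_right h4
      rw [h5]
      exact inv_mem hrh
    have hmP : (m : ↥R) ∈ P.subgroupOf R := Subgroup.mem_subgroupOf.mpr hrm
    have hm1 : (m : ↥R) = 1 := by
      have := Subgroup.disjoint_def.mp hM₁.disjoint hmP hm
      exact this
    have hyh : R.subtype (h * m) = ((h : ↥R) : N ⋊[α] J) := by rw [hsplit, hm1]; simp
    rw [hyh] at hx1 ⊢
    have hright1 : ((h : ↥R) : N ⋊[α] J).right = 1 := hx1
    refine SemidirectProduct.ext ?_ hright1
    rw [hhH.2, hright1, hφ.map_one]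
    rfl
  have claimB : ∀ j : J, ∃ x ∈ KG, SemidirectProduct.rightHom x = j := by
    intro j
    obtain ⟨⟨q, m⟩, hqm⟩ := hM₁.2 (⟨r j, hrmem j⟩ : ↥R)
    have hqP : (((q : ↥R) : N ⋊[α] J)) ∈ P := Subgroup.mem_subgroupOf.mp q.2
    have hqJp : SemidirectProduct.rightHom ((q : ↥R) : N ⋊[α] J) ∈ (Jp : Subgroup J) := hqP
    set k₀ : J := SemidirectProduct.rightHom ((q : ↥R) : N ⋊[α] J) with hk₀
    have hk₀H : (⟨φ k₀, k₀⟩ : N ⋊[α] J) ∈ H := ⟨hqJp, rfl⟩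
    refine ⟨(⟨φ k₀, k₀⟩ : N ⋊[α] J) * ((m : ↥R) : N ⋊[α] J), ?_, ?_⟩
    · exact mul_mem (hHK hk₀H) ⟨m, Subgroup.mem_sup_right m.2, rfl⟩
    · rw [map_mul]
      have e1 : SemidirectProduct.rightHom (⟨φ k₀, k₀⟩ : N ⋊[α] J) = k₀ := rfl
      rw [e1, hk₀]
      have hqm' : ((q : ↥R) * (m : ↥R) : ↥R) = (⟨r j, hrmem j⟩ : ↥R) := hqm
      have e2 : ((q : ↥R) : N ⋊[α] J) * ((m : ↥R) : N ⋊[α] J) = ((r j : N ⋊[α] J)) := by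
        rw [← Subgroup.coe_mul, hqm']
      rw [← map_mul, e2]
      rfl
  have hexu : ∀ z₁ z₂ : N ⋊[α] J, z₁ ∈ KG → z₂ ∈ KG →
      SemidirectProduct.rightHom z₁ = SemidirectProduct.rightHom z₂ → z₁ = z₂ := by
    intro z₁ z₂ h₁ h₂ he
    have h4 : z₁ * z₂⁻¹ ∈ KG := mul_mem h₁ (inv_mem h₂)
    have h5 : SemidirectProduct.rightHom (z₁ * z₂⁻¹) = 1 := by
      rw [map_mul, map_inv, he, mul_inv_cancel]
    exact mul_inv_eq_one.mp (claimA _ h4 h5)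
  choose xx hxxK hxxR using claimB
  refine ⟨fun j => (xx j).left, ?_, ?_⟩
  · intro j j'
    have h1 : xx (j * j') = xx j * xx j' :=
      hexu _ _ (hxxK _) (mul_mem (hxxK j) (hxxK j'))
        (by rw [hxxR, map_mul, hxxR, hxxR])
    show (xx (j * j')).left = (xx j).left * j • (xx j').left
    have h2 : (xx j).right = j := hxxR j
    rw [h1, SemidirectProduct.mul_left, h2, hact]
  · refine ⟨1, fun k hk => ?_⟩
    have hkKG : (⟨φ k, k⟩ : N ⋊[α] J) ∈ KG := hHK ⟨hk, rfl⟩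
    have h1 : xx k = ⟨φ k, k⟩ := hexu _ _ (hxxK k) hkKG (hxxR k)
    show φ k = 1⁻¹ * (xx k).left * k • (1 : N)
    rw [h1]
    simp

end AuxStmt14

/-- Let `J = J_p ⋊ M` with `J_p` a normal Sylow `p`-subgroup and `M` a `p`-complement,
acting on a finite `p`-group `N`.  If `φ ∈ Z¹(J_p,N)` is strictly `M`-equivariant,
then `φ̃(hm) = φ(h)` is a cocycle on `J` extending `φ`; and in general every
`J`-invariant class in `H¹(J_p,N)` lies in the image of `res^J_{J_p}`. -/
theorem stmt14 {J N : Type*} [Group J] [Group N] [Finite J] [Finite N]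
    [MulDistribMulAction J N] {p : ℕ} (hp : p.Prime) (hN : IsPGroup p N)
    (Jp : Sylow p J) [(Jp : Subgroup J).Normal] (M : Subgroup J)
    (hcompl : Subgroup.IsComplement' (Jp : Subgroup J) M) :
    (∀ φ : J → N, IsCocycleOn (Jp : Subgroup J) φ →
        (∀ m ∈ M, ∀ h ∈ (Jp : Subgroup J), cocycleTwist m φ h = φ h) →
        ∃ ψ : J → N, IsCocycle ψ ∧
          (∀ h ∈ (Jp : Subgroup J), ∀ m ∈ M, ψ (h * m) = φ h)) ∧
      (∀ φ : J → N, IsCocycleOn (Jp : Subgroup J) φ → IsInvariantOn (Jp : Subgroup J) φ →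
        ∃ ψ : J → N, IsCocycle ψ ∧ CohomologousOn (Jp : Subgroup J) ψ φ) := by
  constructor
  · intro φ hφ heq
    exact stmt14_part1 (Jp : Subgroup J) M inferInstance hcompl φ hφ heq
  · intro φ hφ hinv
    exact stmt14_part2 hp hN Jp φ hφ hinv
end

section
/- Let G be a finite group with normal abelian subgroup N, and suppose G_α ≤ G satisfies G = N·G_α. If for each prime p there exist a complement J of N in G, P ∈ Syl_p(J), and n ∈ N with P^n ≤ G_α, then a Sylow p-subgroup S of G_α splits over S ∩ N for every prime p, and hence (by Gaschütz's theorem) G_α splits over N ∩ G_α. -/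
open Pointwise

theorem myComplementUNUSED' {W : Type*} [Group W] [Finite W] {H K : Subgroup W} (hd : Disjoint H K)
    (hc : Nat.card H * Nat.card K = Nat.card W) : H.IsComplement' K := by
  have hinj : Function.Injective (fun x : H × K => x.1.1 * x.2.1) := by
    rintro ⟨⟨h1, hh1⟩, ⟨k1, hk1⟩⟩ ⟨⟨h2, hh2⟩, ⟨k2, hk2⟩⟩ heq
    simp only [Prod.mk.injEq, Subtype.mk.injEq] at heq ⊢
    have key : h2⁻¹ * h1 = k2 * k1⁻¹ := by
      have h' : h2 * (k2 * k1⁻¹) = h2 * (h2⁻¹ * h1) := by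
        rw [← mul_assoc, ← heq]; group
      exact (mul_left_cancel h').symm
    have hmem : h2⁻¹ * h1 = 1 := Subgroup.disjoint_def.mp hd
      (mul_mem (inv_mem hh2) hh1) (key ▸ mul_mem hk2 (inv_mem hk1))
    rw [hmem] at key
    constructor
    · exact (inv_mul_eq_one.mp hmem).symm
    · exact (mul_inv_eq_one.mp key.symm).symm
  exact (Nat.bijective_iff_injective_and_card _).mpr
    ⟨hinj, by simpa [Nat.card_prod] using hc⟩

theorem gaschutz_abelian {W : Type*} [Group W] [Finite W] (A U L : Subgroup W) [hN : A.Normal]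
    (hA : ∀ a ∈ A, ∀ b ∈ A, a * b = b * a) (hAU : A ≤ U)
    (hd : Disjoint A L) (hm : (A : Set W) * (L : Set W) = (U : Set W))
    (hcop : Nat.Coprime (Nat.card A) U.index) :
    ∃ C : Subgroup W, A.IsComplement' C := by
  classical
  letI : Fintype (W ⧸ U) := Fintype.ofFinite _
  letI hAc : CommGroup A := { (inferInstance : Group A) with mul_comm := fun a b => Subtype.ext (hA a a.2 b b.2) }
  -- decomposition
  have h0 : ∀ u : W, u ∈ U → ∃ a, a ∈ (A : Set W) ∧ ∃ l, l ∈ (L : Set W) ∧ a * l = u := by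
    intro u hu
    have : u ∈ (A : Set W) * (L : Set W) := hm ▸ hu
    simpa [Set.mem_mul] using this
  choose! pia hpa pil hpl hpf using h0
  have huniq : ∀ a l, a ∈ A → l ∈ L → pia (a * l) = a := by
    intro a l haa hll
    have hu : a * l ∈ U := by
      have : a * l ∈ (A : Set W) * (L : Set W) := Set.mul_mem_mul haa hll
      rwa [hm] at this
    have h1 := hpa _ hu
    have h2 := hpl _ hu
    have h3 := hpf _ hu
    have key : a⁻¹ * pia (a * l) = l * (pil (a * l))⁻¹ := by
      rw [eq_comm, mul_inv_eq_iff_eq_mul, mul_assoc, h3]; group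
    have : a⁻¹ * pia (a * l) = 1 := Subgroup.disjoint_def.mp hd
      (mul_mem (inv_mem haa) h1) (key ▸ mul_mem hll (inv_mem h2))
    rw [eq_comm, ← inv_mul_eq_one]; exact this
  have pia_id : ∀ a ∈ A, pia a = a := fun a ha' => by
    simpa using huniq a 1 ha' L.one_mem
  have hpimul : ∀ u v, u ∈ U → v ∈ U → pia (u * v) = u * pia v * u⁻¹ * pia u := by
    intro u v hu hv
    have ha1 := hpa u hu
    have hl1 := hpl u hu
    have ha2 := hpa v hv
    have hl2 := hpl v hv
    have hdu := hpf u hu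
    have hdv := hpf v hv
    set a1 := pia u
    set l1 := pil u
    set a2 := pia v
    set l2 := pil v
    have hx : u * v = (a1 * (l1 * a2 * l1⁻¹)) * (l1 * l2) := by
      rw [← hdu, ← hdv]; group
    rw [hx, huniq _ _ (mul_mem ha1 (hN.conj_mem _ ha2 l1)) (mul_mem hl1 hl2), ← hdu]
    group
  -- the cocycle
  set r : W ⧸ U → W := fun q => q.out with hr
  have hout : ∀ q : W ⧸ U, (QuotientGroup.mk (r q) : W ⧸ U) = q := fun q => q.out_eq'
  have hsm : ∀ (g : W) (q : W ⧸ U), ((QuotientGroup.mk (g * r q)) : W ⧸ U) = g • q := by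
    intro g q
    rw [← smul_eq_mul]
    exact MulAction.Quotient.mk_smul_out U g q
  have huuU : ∀ (g : W) (q : W ⧸ U), (r (g • q))⁻¹ * g * r q ∈ U := by
    intro g q
    have : ((QuotientGroup.mk (g * r q)) : W ⧸ U) = QuotientGroup.mk (r (g • q)) := by
      rw [hsm, hout]
    have h2 := QuotientGroup.eq.mp this.symm
    rwa [← mul_assoc] at h2
  have cmem : ∀ (g : W) (q : W ⧸ U), r (g • q) * pia ((r (g • q))⁻¹ * g * r q) * (r (g • q))⁻¹ ∈ A :=
    fun g q => by
      have := hpa _ (huuU g q)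
      exact hN.conj_mem _ this _
  set c : W → W ⧸ U → A := fun g q => ⟨_, cmem g q⟩ with hc
  set φ : W → (A →* A) := fun g =>
    { toFun := fun a => ⟨g * a * g⁻¹, hN.conj_mem _ a.2 _⟩
      map_one' := by simp
      map_mul' := fun x y => Subtype.ext (by push_cast; group) } with hφ
  have hc_mul : ∀ g₁ g₂ q, c (g₁ * g₂) q = φ g₁ (c g₂ q) * c g₁ (g₂ • q) := by
    intro g₁ g₂ q
    apply Subtype.ext
    have hq : (g₁ * g₂) • q = g₁ • (g₂ • q) := mul_smul g₁ g₂ q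
    show r ((g₁ * g₂) • q) * pia ((r ((g₁ * g₂) • q))⁻¹ * (g₁ * g₂) * r q) * (r ((g₁ * g₂) • q))⁻¹
      = (g₁ * (r (g₂ • q) * pia ((r (g₂ • q))⁻¹ * g₂ * r q) * (r (g₂ • q))⁻¹) * g₁⁻¹) *
        (r (g₁ • g₂ • q) * pia ((r (g₁ • g₂ • q))⁻¹ * g₁ * r (g₂ • q)) * (r (g₁ • g₂ • q))⁻¹)
    rw [hq]
    have hsplit : (r (g₁ • g₂ • q))⁻¹ * (g₁ * g₂) * r q
        = ((r (g₁ • g₂ • q))⁻¹ * g₁ * r (g₂ • q)) * ((r (g₂ • q))⁻¹ * g₂ * r q) := by group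
    rw [hsplit, hpimul _ _ (by simpa [hq] using huuU g₁ (g₂ • q)) (huuU g₂ q)]
    group
  set f : W → A := fun g => ∏ q : W ⧸ U, c g q with hf
  have hf_mul : ∀ g₁ g₂, f (g₁ * g₂) = φ g₁ (f g₂) * f g₁ := by
    intro g₁ g₂
    calc f (g₁ * g₂) = ∏ q : W ⧸ U, φ g₁ (c g₂ q) * c g₁ (g₂ • q) := by
          rw [hf]; exact Finset.prod_congr rfl fun q _ => hc_mul g₁ g₂ q
      _ = (∏ q : W ⧸ U, φ g₁ (c g₂ q)) * ∏ q : W ⧸ U, c g₁ (g₂ • q) := Finset.prod_mul_distrib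
      _ = φ g₁ (f g₂) * f g₁ := by
          rw [hf, map_prod]
          congr 1
          exact Equiv.prod_comp (MulAction.toPerm g₂) (c g₁)
  have hfA : ∀ (a : W) (ha : a ∈ A), f a = (⟨a, ha⟩ : A) ^ U.index := by
    intro a haA
    have hfix : ∀ q : W ⧸ U, a • q = q := by
      intro q
      rw [← hsm a q]
      conv_rhs => rw [← hout q]
      apply (QuotientGroup.eq).mpr
      have h2 : (a * r q)⁻¹ * r q = (r q)⁻¹ * a⁻¹ * r q := by group
      rw [h2]
      exact hAU (by simpa using hN.conj_mem a⁻¹ (inv_mem haA) (r q)⁻¹)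
    have hcq : ∀ q : W ⧸ U, c a q = ⟨a, haA⟩ := by
      intro q
      apply Subtype.ext
      show r (a • q) * pia ((r (a • q))⁻¹ * a * r q) * (r (a • q))⁻¹ = a
      rw [hfix q]
      have hmem : (r q)⁻¹ * a * r q ∈ A := by
        have := hN.conj_mem a haA (r q)⁻¹
        simpa using this
      rw [pia_id _ hmem]; group
    rw [hf]
    simp only [hcq]
    rw [Finset.prod_const, Finset.card_univ, Subgroup.index_eq_card, Nat.card_eq_fintype_card]
  have hφA : ∀ a ∈ A, ∀ x : A, φ a x = x := by
    intro a ha x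
    apply Subtype.ext
    show a * x * a⁻¹ = x
    rw [hA a ha x x.2]; group
  have hf1 : f 1 = 1 := by
    have h := hf_mul 1 1
    rw [mul_one, hφA 1 A.one_mem] at h
    exact (left_eq_mul.mp h)
  have hfinv : ∀ g, f g = 1 → f g⁻¹ = 1 := by
    intro g hg
    have h := hf_mul g⁻¹ g
    rw [inv_mul_cancel, hf1, hg, map_one, one_mul] at h
    exact h.symm
  set K : Subgroup W :=
    { carrier := {g | f g = 1}
      one_mem' := hf1
      mul_mem' := fun {x y} hx hy => by
        show f (x * y) = 1
        rw [hf_mul, hx, hy, map_one, one_mul]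
      inv_mem' := fun {x} hx => hfinv x hx } with hK
  have hdisj : Disjoint A K := by
    rw [Subgroup.disjoint_def]
    intro x hxA hxK
    have h1 : (⟨x, hxA⟩ : A) ^ U.index = 1 := by
      rw [← hfA x hxA]; exact hxK
    have h2 : orderOf (⟨x, hxA⟩ : A) ∣ Nat.card A := orderOf_dvd_natCard _
    have h3 : orderOf (⟨x, hxA⟩ : A) ∣ U.index := orderOf_dvd_of_pow_eq_one h1
    have h4 : orderOf (⟨x, hxA⟩ : A) = 1 := Nat.dvd_one.mp (hcop ▸ Nat.dvd_gcd h2 h3)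
    have := orderOf_eq_one_iff.mp h4
    exact Subtype.ext_iff.mp this
  have hsurj : ∀ g : W, ∃ a ∈ A, a⁻¹ * g ∈ K := by
    intro g
    set b : A := (powCoprime hcop).symm (f g) with hb
    refine ⟨(b : W), b.2, ?_⟩
    show f ((b : W)⁻¹ * g) = 1
    have hbpow : b ^ U.index = f g := (powCoprime hcop).apply_symm_apply (f g)
    have hfb : f ((b : W)⁻¹) = (f g)⁻¹ := by
      have : ((b⁻¹ : A) : W) = (b : W)⁻¹ := rfl
      rw [← this, hfA _ (b⁻¹ : A).2]
      have : (⟨((b⁻¹ : A) : W), (b⁻¹ : A).2⟩ : A) = b⁻¹ := Subtype.ext rfl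
      rw [this, inv_pow, hbpow]
    rw [hf_mul, hφA _ (inv_mem b.2), hfb, mul_inv_cancel]
  have hmul : ((A : Set W) * (K : Set W)) = Set.univ := by
    apply Set.eq_univ_of_forall
    intro g
    obtain ⟨a, ha, hk⟩ := hsurj g
    exact Set.mem_mul.mpr ⟨a, ha, a⁻¹ * g, hk, by group⟩
  exact ⟨K, Subgroup.isComplement'_of_disjoint_and_mul_eq_univ hdisj hmul⟩



section helpers
variable {W : Type*} [Group W] [Finite W]

theorem myMulInj {H K : Subgroup W} (hd : Disjoint H K) :
    Function.Injective (fun x : H × K => x.1.1 * x.2.1) := by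
  rintro ⟨⟨h1, hh1⟩, ⟨k1, hk1⟩⟩ ⟨⟨h2, hh2⟩, ⟨k2, hk2⟩⟩ heq
  simp only [Prod.mk.injEq, Subtype.mk.injEq] at heq ⊢
  have key : h2⁻¹ * h1 = k2 * k1⁻¹ := by
    have h' : h2 * (k2 * k1⁻¹) = h2 * (h2⁻¹ * h1) := by
      rw [← mul_assoc, ← heq]; group
    exact (mul_left_cancel h').symm
  have hmem : h2⁻¹ * h1 = 1 := Subgroup.disjoint_def.mp hd
    (mul_mem (inv_mem hh2) hh1) (key ▸ mul_mem hk2 (inv_mem hk1))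
  rw [hmem] at key
  exact ⟨(inv_mul_eq_one.mp hmem).symm, (mul_inv_eq_one.mp key.symm).symm⟩

theorem myComplement'2 {H K : Subgroup W} (hd : Disjoint H K)
    (hc : Nat.card H * Nat.card K = Nat.card W) : H.IsComplement' K :=
  (Nat.bijective_iff_injective_and_card _).mpr
    ⟨myMulInj hd, by simpa [Nat.card_prod] using hc⟩

theorem myCardMulLe {H K : Subgroup W} (hd : Disjoint H K) :
    Nat.card H * Nat.card K ≤ Nat.card W := by
  have := Nat.card_le_card_of_injective _ (myMulInj hd)
  simpa [Nat.card_prod] using this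

end helpers

theorem supplement_card {G : Type*} [Group G] [Finite G] (N : Subgroup G) [N.Normal]
    (Gα : Subgroup G) (hsup : (N : Set G) * (Gα : Set G) = Set.univ) :
    Nat.card (N.subgroupOf Gα) * N.index = Nat.card Gα := by
  let φ : ↥Gα →* G ⧸ N := (QuotientGroup.mk' N).comp Gα.subtype
  have hker : φ.ker = N.subgroupOf Gα := by
    ext x
    simp [φ, MonoidHom.mem_ker, QuotientGroup.eq_one_iff, Subgroup.mem_subgroupOf]
  have hsurj : Function.Surjective φ := by
    intro q
    obtain ⟨g, rfl⟩ := QuotientGroup.mk_surjective q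
    have hg : g ∈ (N : Set G) * (Gα : Set G) := by rw [hsup]; trivial
    obtain ⟨a, ha, x, hx, hax⟩ := Set.mem_mul.mp hg
    refine ⟨⟨x, hx⟩, ?_⟩
    show QuotientGroup.mk x = QuotientGroup.mk g
    apply (QuotientGroup.eq).mpr
    have : x⁻¹ * g = x⁻¹ * a * (x⁻¹)⁻¹ := by rw [← hax]; group
    rw [this]
    exact ‹N.Normal›.conj_mem a ha x⁻¹
  have h1 : Nat.card ↥Gα = Nat.card (↥Gα ⧸ φ.ker) * Nat.card φ.ker :=
    Subgroup.card_eq_card_quotient_mul_card_subgroup φ.ker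
  have h2 : Nat.card (↥Gα ⧸ φ.ker) = Nat.card (G ⧸ N) :=
    Nat.card_congr (QuotientGroup.quotientKerEquivOfSurjective φ hsurj).toEquiv
  rw [h1, h2, hker, ← Subgroup.index_eq_card, mul_comm]

theorem part_a_aux {G : Type*} [Group G] [Finite G] (N : Subgroup G) [N.Normal]
    (Gα : Subgroup G) (hsup : (N : Set G) * (Gα : Set G) = Set.univ) {p : ℕ} [hp : Fact p.Prime]
    (J : Subgroup G) (hJ : N.IsComplement' J) (P : Sylow p J) (n : G) (hn : n ∈ N)
    (hPn : ((P : Subgroup J).map J.subtype).map (MulAut.conj n).toMonoidHom ≤ Gα) :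
    ∃ (S : Sylow p Gα) (K : Subgroup ↥Gα), K ≤ (S : Subgroup ↥Gα) ∧
      Disjoint (N.subgroupOf Gα) K ∧
      Subgroup.IsComplement'
        (((N.subgroupOf Gα) ⊓ (S : Subgroup ↥Gα)).subgroupOf (S : Subgroup ↥Gα))
        (K.subgroupOf (S : Subgroup ↥Gα)) ∧
      Nat.card ((N.subgroupOf Gα) ⊓ (S : Subgroup ↥Gα) : Subgroup ↥Gα)
        = p ^ ((Nat.card (N.subgroupOf Gα)).factorization p) := by
  classical
  set M : Subgroup ↥Gα := N.subgroupOf Gα with hM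
  set Q : Subgroup G := ((P : Subgroup J).map J.subtype).map (MulAut.conj n).toMonoidHom with hQ
  have hQp : IsPGroup p Q := (P.isPGroup'.map J.subtype).map _
  set K : Subgroup ↥Gα := Q.subgroupOf Gα with hK
  have hKp : IsPGroup p K := hQp.comap_of_injective Gα.subtype Gα.subtype_injective
  obtain ⟨S, hKS⟩ := hKp.exists_le_sylow
  -- cardinalities
  have hcardJ : Nat.card J = N.index := by
    have h1 := hJ.card_mul
    have h2 := N.card_mul_index
    exact Nat.eq_of_mul_eq_mul_left Nat.card_pos (h1.trans h2.symm)
  have hcardK : Nat.card K = p ^ (N.index.factorization p) := by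
    have e1 : Nat.card K = Nat.card Q :=
      Nat.card_congr (Subgroup.subgroupOfEquivOfLe hPn).toEquiv
    have e2 : Nat.card Q = Nat.card ((P : Subgroup J).map J.subtype) :=
      (Nat.card_congr (Subgroup.equivMapOfInjective _ _ (MulAut.conj n).injective).toEquiv).symm
    have e3 : Nat.card ((P : Subgroup J).map J.subtype) = Nat.card (P : Subgroup J) :=
      (Nat.card_congr (Subgroup.equivMapOfInjective _ _ J.subtype_injective).toEquiv).symm
    have e4 : Nat.card (P : Subgroup J) = p ^ ((Nat.card J).factorization p) :=
      P.card_eq_multiplicity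
    rw [e1, e2, e3, e4, hcardJ]
  -- disjointness of M and K
  have hdisjMK : Disjoint M K := by
    rw [Subgroup.disjoint_def]
    intro x hxM hxK
    have hxN : (x : G) ∈ N := hxM
    have hxQ : (x : G) ∈ Q := hxK
    obtain ⟨y, hy, hyx⟩ := Subgroup.mem_map.mp hxQ
    have hyJ : y ∈ J := Subgroup.map_subtype_le _ hy
    have hyval : n * y * n⁻¹ = (x : G) := hyx
    have hyN : y ∈ N := by
      have : y = n⁻¹ * (x : G) * n := by rw [← hyval]; group
      rw [this]
      exact mul_mem (mul_mem (inv_mem hn) hxN) hn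
    have hy1 : y = 1 := Subgroup.disjoint_def.mp hJ.disjoint hyN hyJ
    have : (x : G) = 1 := by rw [← hyval, hy1]; group
    exact Subtype.ext this
  -- counting
  have hMcard : Nat.card M * N.index = Nat.card ↥Gα := supplement_card N Gα hsup
  set fM := (Nat.card M).factorization p with hfM
  set fI := (N.index).factorization p with hfI
  have hM0 : Nat.card M ≠ 0 := Nat.card_pos.ne'
  have hI0 : N.index ≠ 0 := Subgroup.index_ne_zero_of_finite
  have hGf : (Nat.card ↥Gα).factorization p = fM + fI := by
    rw [← hMcard, Nat.factorization_mul hM0 hI0]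
    simp [hfM, hfI]
  have hScard : Nat.card (S : Subgroup ↥Gα) = p ^ (fM + fI) := by
    rw [S.card_eq_multiplicity, hGf]
  have hMSp : IsPGroup p (M ⊓ (S : Subgroup ↥Gα) : Subgroup ↥Gα) :=
    S.isPGroup'.to_le inf_le_right
  obtain ⟨k, hk⟩ := IsPGroup.iff_card.mp hMSp
  have hkle : k ≤ fM := by
    have hdvd : p ^ k ∣ Nat.card M := hk ▸ Subgroup.card_dvd_of_le inf_le_left
    exact (Nat.Prime.pow_dvd_iff_le_factorization hp.out hM0).mp hdvd
  set ψ : ↥(S : Subgroup ↥Gα) →* ↥Gα ⧸ M :=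
    (QuotientGroup.mk' M).comp (S : Subgroup ↥Gα).subtype with hψ
  have hkerψ : ψ.ker = (M ⊓ (S : Subgroup ↥Gα)).subgroupOf (S : Subgroup ↥Gα) := by
    ext x
    simp only [hψ, MonoidHom.mem_ker, MonoidHom.comp_apply, Subgroup.coe_subtype,
      QuotientGroup.mk'_apply, QuotientGroup.eq_one_iff, Subgroup.mem_subgroupOf,
      Subgroup.mem_inf]
    exact ⟨fun h => ⟨h, x.2⟩, fun h => h.1⟩
  have hcardker : Nat.card ψ.ker = Nat.card (M ⊓ (S : Subgroup ↥Gα) : Subgroup ↥Gα) := by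
    rw [hkerψ]
    exact Nat.card_congr (Subgroup.subgroupOfEquivOfLe inf_le_right).toEquiv
  have hrangep : IsPGroup p ψ.range :=
    S.isPGroup'.of_surjective ψ.rangeRestrict ψ.rangeRestrict_surjective
  obtain ⟨j, hj⟩ := IsPGroup.iff_card.mp hrangep
  have hMidx : M.index = N.index := by
    have h1 := M.card_mul_index
    rw [← hMcard] at h1
    exact Nat.eq_of_mul_eq_mul_left Nat.card_pos h1
  have hjle : j ≤ fI := by
    have hdvd : Nat.card ψ.range ∣ Nat.card (↥Gα ⧸ M) := Subgroup.card_subgroup_dvd_card _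
    rw [hj, ← Subgroup.index_eq_card, hMidx] at hdvd
    exact (Nat.Prime.pow_dvd_iff_le_factorization hp.out hI0).mp hdvd
  have hSsplit : Nat.card (S : Subgroup ↥Gα) = Nat.card ψ.range * Nat.card ψ.ker := by
    have h1 := Subgroup.card_eq_card_quotient_mul_card_subgroup ψ.ker
    have h2 : Nat.card (↥(S : Subgroup ↥Gα) ⧸ ψ.ker) = Nat.card ψ.range :=
      Nat.card_congr (QuotientGroup.quotientKerEquivRange ψ).toEquiv
    rw [h1, h2]
  have hexp : fM + fI = j + k := by
    have : p ^ (fM + fI) = p ^ (j + k) := by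
      rw [← hScard, hSsplit, hj, hcardker, hk, pow_add]
    exact Nat.pow_right_injective hp.out.two_le this
  have hkfM : k = fM := by omega
  have hMScard : Nat.card (M ⊓ (S : Subgroup ↥Gα) : Subgroup ↥Gα) = p ^ fM := by
    rw [hk, hkfM]
  -- complement inside S
  have hdisj' : Disjoint ((M ⊓ (S : Subgroup ↥Gα)).subgroupOf (S : Subgroup ↥Gα))
      (K.subgroupOf (S : Subgroup ↥Gα)) := by
    rw [Subgroup.disjoint_def]
    intro x hx1 hx2
    have h1 : (x : ↥Gα) ∈ M ⊓ (S : Subgroup ↥Gα) := hx1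
    have h2 : (x : ↥Gα) ∈ K := hx2
    have : (x : ↥Gα) = 1 := Subgroup.disjoint_def.mp hdisjMK h1.1 h2
    exact Subtype.ext this
  have hcomp : Subgroup.IsComplement'
      ((M ⊓ (S : Subgroup ↥Gα)).subgroupOf (S : Subgroup ↥Gα))
      (K.subgroupOf (S : Subgroup ↥Gα)) := by
    apply myComplement'2 hdisj'
    have c1 : Nat.card ((M ⊓ (S : Subgroup ↥Gα)).subgroupOf (S : Subgroup ↥Gα))
        = Nat.card (M ⊓ (S : Subgroup ↥Gα) : Subgroup ↥Gα) :=
      Nat.card_congr (Subgroup.subgroupOfEquivOfLe inf_le_right).toEquiv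
    have c2 : Nat.card (K.subgroupOf (S : Subgroup ↥Gα)) = Nat.card K :=
      Nat.card_congr (Subgroup.subgroupOfEquivOfLe hKS).toEquiv
    rw [c1, c2, hMScard, hcardK, ← pow_add, ← hScard]
  exact ⟨S, K, hKS, hdisjMK, hcomp, hMScard⟩



section primary
variable {W : Type*} [Group W] [Finite W]

/-- The `p`-primary component of a commutative subgroup. -/
def primaryPart (M : Subgroup W) (hM : ∀ a ∈ M, ∀ b ∈ M, a * b = b * a) (p : ℕ) :
    Subgroup W where
  carrier := {x | x ∈ M ∧ ∃ k : ℕ, x ^ p ^ k = 1}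
  one_mem' := ⟨M.one_mem, 0, one_pow _⟩
  mul_mem' := by
    rintro a b ⟨haM, k, hk⟩ ⟨hbM, l, hl⟩
    refine ⟨M.mul_mem haM hbM, k + l, ?_⟩
    have hco : Commute a b := hM a haM b hbM
    have h1 : a ^ p ^ (k + l) = 1 := by rw [pow_add, pow_mul, hk, one_pow]
    have h2 : b ^ p ^ (k + l) = 1 := by
      rw [pow_add, mul_comm (p ^ k), pow_mul, hl, one_pow]
    rw [hco.mul_pow, h1, h2, one_mul]
  inv_mem' := by
    rintro a ⟨haM, k, hk⟩
    exact ⟨M.inv_mem haM, k, by rw [inv_pow, hk, inv_one]⟩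

theorem primaryPart_le (M : Subgroup W) (hM : ∀ a ∈ M, ∀ b ∈ M, a * b = b * a) (p : ℕ) :
    primaryPart M hM p ≤ M := fun _ hx => hx.1

theorem primaryPart_normal (M : Subgroup W) (hM : ∀ a ∈ M, ∀ b ∈ M, a * b = b * a) (p : ℕ)
    (hMn : M.Normal) : (primaryPart M hM p).Normal := by
  constructor
  rintro x ⟨hxM, k, hk⟩ g
  refine ⟨hMn.conj_mem x hxM g, k, ?_⟩
  rw [conj_pow, hk, mul_one, mul_inv_cancel]

theorem isPGroup_primaryPart (M : Subgroup W) (hM : ∀ a ∈ M, ∀ b ∈ M, a * b = b * a) (p : ℕ) :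
    IsPGroup p (primaryPart M hM p) := by
  rintro ⟨x, hxM, k, hk⟩
  exact ⟨k, Subtype.ext (by simpa using hk)⟩

/-- The subgroup of elements of a commutative subgroup of order coprime to `p`. -/
def coprimaryPart (M : Subgroup W) (hM : ∀ a ∈ M, ∀ b ∈ M, a * b = b * a) {p : ℕ}
    (hp : p.Prime) : Subgroup W where
  carrier := {x | x ∈ M ∧ ¬ p ∣ orderOf x}
  one_mem' := ⟨M.one_mem, by simpa using hp.ne_one⟩
  mul_mem' := by
    rintro a b ⟨haM, ha⟩ ⟨hbM, hb⟩
    refine ⟨M.mul_mem haM hbM, fun hdvd => ?_⟩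
    have hco : Commute a b := hM a haM b hbM
    have h1 : orderOf (a * b) ∣ orderOf a * orderOf b :=
      hco.orderOf_mul_dvd_lcm.trans (Nat.lcm_dvd_mul _ _)
    rcases (Nat.Prime.dvd_mul hp).mp (hdvd.trans h1) with h | h
    · exact ha h
    · exact hb h
  inv_mem' := by
    rintro a ⟨haM, ha⟩
    exact ⟨M.inv_mem haM, by rwa [orderOf_inv]⟩

theorem coprimaryPart_le (M : Subgroup W) (hM : ∀ a ∈ M, ∀ b ∈ M, a * b = b * a) {p : ℕ}
    (hp : p.Prime) : coprimaryPart M hM hp ≤ M := fun _ hx => hx.1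

theorem coprimaryPart_normal (M : Subgroup W) (hM : ∀ a ∈ M, ∀ b ∈ M, a * b = b * a) {p : ℕ}
    (hp : p.Prime) (hMn : M.Normal) : (coprimaryPart M hM hp).Normal := by
  constructor
  rintro x ⟨hxM, hx⟩ g
  refine ⟨hMn.conj_mem x hxM g, ?_⟩
  have : orderOf (g * x * g⁻¹) = orderOf x := by
    have := orderOf_injective (MulAut.conj g).toMonoidHom (MulAut.conj g).injective x
    simpa using this
  rwa [this]

theorem primary_coprimary_disjoint (M : Subgroup W) (hM : ∀ a ∈ M, ∀ b ∈ M, a * b = b * a)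
    {p : ℕ} (hp : p.Prime) : Disjoint (primaryPart M hM p) (coprimaryPart M hM hp) := by
  rw [Subgroup.disjoint_def]
  rintro x ⟨-, k, hk⟩ ⟨-, hnd⟩
  have h1 : orderOf x ∣ p ^ k := orderOf_dvd_of_pow_eq_one hk
  have h2 : Nat.Coprime (orderOf x) (p ^ k) :=
    ((hp.coprime_iff_not_dvd.mpr hnd).symm).pow_right _
  have : orderOf x = 1 := Nat.dvd_one.mp (h2 ▸ Nat.dvd_gcd dvd_rfl h1)
  exact orderOf_eq_one_iff.mp this

theorem primary_decomp (M : Subgroup W) (hM : ∀ a ∈ M, ∀ b ∈ M, a * b = b * a)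
    {p : ℕ} (hp : p.Prime) {x : W} (hx : x ∈ M) :
    ∃ a ∈ primaryPart M hM p, ∃ b ∈ coprimaryPart M hM hp, x = a * b := by
  set o := orderOf x with ho
  have ho0 : o ≠ 0 := (orderOf_pos x).ne'
  set k := o.factorization p with hkdef
  set m := ordCompl[p] o with hmdef
  have hsplit : p ^ k * m = o := Nat.ordProj_mul_ordCompl_eq_self o p
  have hcop : Nat.Coprime (p ^ k) m := (Nat.coprime_ordCompl hp ho0).pow_left _
  obtain ⟨u, v, huv⟩ := hcop.isCoprime
  have hxo : x ^ (o : ℤ) = 1 := by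
    rw [zpow_natCast]; exact pow_orderOf_eq_one x
  refine ⟨x ^ ((m : ℤ) * v), ⟨M.zpow_mem hx _, k, ?_⟩,
    x ^ (((p : ℤ) ^ k) * u), ⟨M.zpow_mem hx _, ?_⟩, ?_⟩
  · rw [← zpow_natCast (x ^ ((m : ℤ) * v)) (p ^ k), ← zpow_mul]
    have he : (m : ℤ) * v * (p ^ k : ℕ) = (o : ℤ) * v := by
      rw [← hsplit]; push_cast; ring
    rw [he, zpow_mul, hxo, one_zpow]
  · intro hdvd
    have hb : (x ^ (((p : ℤ) ^ k) * u)) ^ m = 1 := by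
      rw [← zpow_natCast (x ^ (((p : ℤ) ^ k) * u)) m, ← zpow_mul]
      have he : ((p : ℤ) ^ k) * u * m = (o : ℤ) * u := by
        rw [← hsplit]; push_cast; ring
      rw [he, zpow_mul, hxo, one_zpow]
    have h1 : orderOf (x ^ (((p : ℤ) ^ k) * u)) ∣ m := orderOf_dvd_of_pow_eq_one hb
    exact Nat.not_dvd_ordCompl hp ho0 (hdvd.trans h1)
  · rw [← zpow_add]
    have he : (m : ℤ) * v + ((p : ℤ) ^ k) * u = 1 := by
      rw [← huv]; push_cast; ring
    rw [he, zpow_one]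

end primary

theorem per_prime {G : Type*} [Group G] [Finite G] (N : Subgroup G) [N.Normal]
    (Gα : Subgroup G) (hsup : (N : Set G) * (Gα : Set G) = Set.univ)
    (hMab : ∀ a ∈ N.subgroupOf Gα, ∀ b ∈ N.subgroupOf Gα, a * b = b * a)
    {p : ℕ} [hp : Fact p.Prime]
    (J : Subgroup G) (hJ : N.IsComplement' J) (P : Sylow p J) (n : G) (hn : n ∈ N)
    (hPn : ((P : Subgroup J).map J.subtype).map (MulAut.conj n).toMonoidHom ≤ Gα) :
    ∃ C : Subgroup ↥Gα, (primaryPart (N.subgroupOf Gα) hMab p).IsComplement' C ∧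
      Nat.card (primaryPart (N.subgroupOf Gα) hMab p)
        = p ^ ((Nat.card (N.subgroupOf Gα)).factorization p) := by
  classical
  obtain ⟨S, K, hKS, hdisjMK, hcomp, hMScard⟩ := part_a_aux N Gα hsup J hJ P n hn hPn
  set M : Subgroup ↥Gα := N.subgroupOf Gα with hMdef
  set A : Subgroup ↥Gα := primaryPart M hMab p with hAdef
  set B : Subgroup ↥Gα := coprimaryPart M hMab hp.out with hBdef
  have hMn : M.Normal := Subgroup.normal_subgroupOf
  have hAM : A ≤ M := primaryPart_le M hMab p
  have hBM : B ≤ M := coprimaryPart_le M hMab hp.out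
  haveI hAn : A.Normal := primaryPart_normal M hMab p hMn
  haveI hBn : B.Normal := coprimaryPart_normal M hMab hp.out hMn
  have hMSp : IsPGroup p ((M ⊓ (S : Subgroup ↥Gα) : Subgroup ↥Gα)) :=
    S.isPGroup'.to_le inf_le_right
  have hMSle : (M ⊓ (S : Subgroup ↥Gα)) ≤ A := by
    intro x hx
    obtain ⟨k, hk⟩ := hMSp ⟨x, hx⟩
    exact ⟨hx.1, k, by simpa using congrArg Subtype.val hk⟩
  have hM0 : Nat.card M ≠ 0 := Nat.card_pos.ne'
  have hcardA : Nat.card A = p ^ ((Nat.card M).factorization p) := by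
    obtain ⟨nn, hnn⟩ := IsPGroup.iff_card.mp (isPGroup_primaryPart M hMab p)
    have hd1 : p ^ ((Nat.card M).factorization p) ∣ Nat.card A :=
      hMScard ▸ Subgroup.card_dvd_of_le hMSle
    have hd2 : Nat.card A ∣ Nat.card M := Subgroup.card_dvd_of_le hAM
    have hnnle : nn ≤ (Nat.card M).factorization p :=
      (Nat.Prime.pow_dvd_iff_le_factorization hp.out hM0).mp (hnn ▸ hd2)
    have hlenn : (Nat.card M).factorization p ≤ nn := by
      have hdd : p ^ ((Nat.card M).factorization p) ∣ p ^ nn := hnn ▸ hd1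
      exact (Nat.pow_dvd_pow_iff_le_right hp.out.one_lt).mp hdd
    rw [hnn]
    congr 1
    omega
  set U : Subgroup ↥Gα := M ⊔ (S : Subgroup ↥Gα) with hUdef
  have hAU : A ≤ U := hAM.trans le_sup_left
  have hUcop : Nat.Coprime (Nat.card A) U.index := by
    rw [hcardA]
    apply Nat.Coprime.pow_left
    rw [hp.out.coprime_iff_not_dvd]
    intro hdvd
    exact S.not_dvd_index (hdvd.trans (Subgroup.index_dvd_of_le le_sup_right))
  set L : Subgroup ↥Gα := B ⊔ K with hLdef
  have hLset : (L : Set ↥Gα) = (B : Set ↥Gα) * (K : Set ↥Gα) := Subgroup.normal_mul B K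
  have hUset : (U : Set ↥Gα) = (M : Set ↥Gα) * ((S : Subgroup ↥Gα) : Set ↥Gα) :=
    Subgroup.normal_mul M _
  have hLU : L ≤ U := sup_le (hBM.trans le_sup_left) (hKS.trans le_sup_right)
  have hdisjAL : Disjoint A L := by
    rw [Subgroup.disjoint_def]
    intro x hxA hxL
    have hxL' : x ∈ (B : Set ↥Gα) * (K : Set ↥Gα) := by
      rw [← hLset]; exact hxL
    obtain ⟨b, hb, kk, hkk, hbk⟩ := Set.mem_mul.mp hxL'
    have hkM : kk ∈ M := by
      have hkeq : kk = b⁻¹ * x := by rw [← hbk]; group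
      rw [hkeq]
      exact M.mul_mem (M.inv_mem (hBM hb)) (hAM hxA)
    have hk1 : kk = 1 := Subgroup.disjoint_def.mp hdisjMK hkM hkk
    have hxB : x ∈ B := by
      have : x = b := by rw [← hbk, hk1, mul_one]
      rw [this]; exact hb
    exact Subgroup.disjoint_def.mp (primary_coprimary_disjoint M hMab hp.out) hxA hxB
  have hmulAL : (A : Set ↥Gα) * (L : Set ↥Gα) = (U : Set ↥Gα) := by
    apply subset_antisymm
    · intro g hg
      obtain ⟨a, ha, l, hl, rfl⟩ := Set.mem_mul.mp hg
      exact U.mul_mem (hAU ha) (hLU hl)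
    · intro u hu
      rw [hUset] at hu
      obtain ⟨mm, hmm, s, hs, rfl⟩ := Set.mem_mul.mp hu
      obtain ⟨⟨x1, y1⟩, hxy⟩ := hcomp.surjective ⟨s, hs⟩
      have hs_eq : ((x1 : ↥(S : Subgroup ↥Gα)) : ↥Gα) * ((y1 : ↥(S : Subgroup ↥Gα)) : ↥Gα)
          = s := by
        have := congrArg (fun z : ↥(S : Subgroup ↥Gα) => (z : ↥Gα)) hxy
        simpa using this
      have hx1 : ((x1 : ↥(S : Subgroup ↥Gα)) : ↥Gα) ∈ M ⊓ (S : Subgroup ↥Gα) := x1.2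
      have hy1 : ((y1 : ↥(S : Subgroup ↥Gα)) : ↥Gα) ∈ K := y1.2
      have hmmx : mm * ((x1 : ↥(S : Subgroup ↥Gα)) : ↥Gα) ∈ M := M.mul_mem hmm hx1.1
      obtain ⟨a, haA, b, hbB, hab'⟩ := primary_decomp M hMab hp.out hmmx
      refine Set.mem_mul.mpr ⟨a, haA, b * ((y1 : ↥(S : Subgroup ↥Gα)) : ↥Gα), ?_, ?_⟩
      · rw [hLset]; exact Set.mul_mem_mul hbB hy1
      · rw [← mul_assoc, ← hab', mul_assoc, hs_eq]
  obtain ⟨C, hC⟩ := gaschutz_abelian A U L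
    (fun a ha b hb => hMab a (hAM ha) b (hAM hb)) hAU hdisjAL hmulAL hUcop
  exact ⟨C, hC, hcardA⟩

/-- Let `N ⊴ G` be abelian and `G_α` a supplement of `N` in `G`.  If for each prime
`p` there are a complement `J` of `N`, a Sylow `p`-subgroup `P` of `J`, and `n ∈ N`
with `P^n ≤ G_α`, then for every prime `p` some Sylow `p`-subgroup `S` of `G_α`
splits over `S ∩ N`, and hence (Gaschütz) `G_α` splits over `N ∩ G_α`. -/
theorem stmt18 {G : Type*} [Group G] [Finite G] (N : Subgroup G) [N.Normal]
    (hab : ∀ a ∈ N, ∀ b ∈ N, a * b = b * a)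
    (Gα : Subgroup G) (hsup : (N : Set G) * (Gα : Set G) = Set.univ)
    (hsyl : ∀ p : ℕ, p.Prime → ∃ (J : Subgroup G) (_ : Subgroup.IsComplement' N J)
      (P : Sylow p J) (n : G) (_ : n ∈ N),
      ((P : Subgroup J).map J.subtype).map (MulAut.conj n).toMonoidHom ≤ Gα) :
    (∀ p : ℕ, p.Prime → ∃ S : Sylow p Gα, ∃ K : Subgroup Gα, K ≤ S ∧
        Subgroup.IsComplement' ((N.subgroupOf Gα ⊓ S).subgroupOf S) (K.subgroupOf S)) ∧
      ∃ K : Subgroup Gα, Subgroup.IsComplement' (N.subgroupOf Gα) K := by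
  classical
  constructor
  · intro p hpp
    haveI : Fact p.Prime := ⟨hpp⟩
    obtain ⟨J, hJ, P, n, hn, hPn⟩ := hsyl p hpp
    obtain ⟨S, K, hKS, hdisjMK, hcomp, -⟩ := part_a_aux N Gα hsup J hJ P n hn hPn
    exact ⟨S, K, hKS, hcomp⟩
  · set M : Subgroup ↥Gα := N.subgroupOf Gα with hMdef
    have hMab : ∀ a ∈ M, ∀ b ∈ M, a * b = b * a := fun a ha b hb =>
      Subtype.ext (hab _ ha _ hb)
    have hM0 : Nat.card M ≠ 0 := Nat.card_pos.ne'
    have hperp : ∀ p ∈ (Nat.card M).primeFactors, ∃ C : Subgroup ↥Gα,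
        (primaryPart M hMab p).IsComplement' C ∧
        Nat.card (primaryPart M hMab p) = p ^ ((Nat.card M).factorization p) := by
      intro p hp
      have hpp : p.Prime := Nat.prime_of_mem_primeFactors hp
      haveI : Fact p.Prime := ⟨hpp⟩
      obtain ⟨J, hJ, P, n, hn, hPn⟩ := hsyl p hpp
      exact per_prime N Gα hsup hMab J hJ P n hn hPn
    choose! C hC1 hC2 using hperp
    set Pf := (Nat.card M).primeFactors with hPf
    set Kt : Subgroup ↥Gα := Pf.inf C with hKt
    -- index bound
    have hidx : ∀ s : Finset ℕ, (s.inf C).index ≤ ∏ q ∈ s, (C q).index := by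
      intro s
      induction s using Finset.cons_induction with
      | empty => simp [Subgroup.index_top]
      | cons a s ha ih =>
        rw [Finset.inf_cons, Finset.prod_cons]
        calc (C a ⊓ s.inf C).index ≤ (C a).index * (s.inf C).index := Subgroup.index_inf_le
          _ ≤ (C a).index * ∏ q ∈ s, (C q).index := Nat.mul_le_mul_left _ ih
    have hCidx : ∀ p ∈ Pf, (C p).index = p ^ ((Nat.card M).factorization p) := by
      intro p hp
      rw [(hC1 p hp).index_eq_card, hC2 p hp]
    have hprodM : ∏ p ∈ Pf, p ^ ((Nat.card M).factorization p) = Nat.card M := by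
      conv_rhs => rw [← Nat.factorization_prod_pow_eq_self hM0]
      rw [Finsupp.prod]
      rfl
    have hKtidx : Kt.index ≤ Nat.card M := by
      calc Kt.index ≤ ∏ q ∈ Pf, (C q).index := hidx Pf
        _ = ∏ p ∈ Pf, p ^ ((Nat.card M).factorization p) := Finset.prod_congr rfl hCidx
        _ = Nat.card M := hprodM
    have hdisjMKt : Disjoint M Kt := by
      rw [Subgroup.disjoint_def]
      intro x hxM hxKt
      by_contra hx1
      have hxo : orderOf x ∣ Nat.card M := by
        have h1 : orderOf (⟨x, hxM⟩ : ↥M) ∣ Nat.card ↥M := orderOf_dvd_natCard _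
        have h2 : orderOf (M.subtype ⟨x, hxM⟩) = orderOf (⟨x, hxM⟩ : ↥M) :=
          orderOf_injective M.subtype M.subtype_injective _
        rw [← h2] at h1
        exact h1
      have ho1 : orderOf x ≠ 1 := fun h => hx1 (orderOf_eq_one_iff.mp h)
      have ho0 : orderOf x ≠ 0 := (orderOf_pos x).ne'
      set q := (orderOf x).minFac with hq
      have hqp : q.Prime := Nat.minFac_prime ho1
      have hqdvd : q ∣ orderOf x := Nat.minFac_dvd _
      have hqPf : q ∈ Pf := Nat.mem_primeFactors.mpr ⟨hqp, hqdvd.trans hxo, hM0⟩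
      set y := x ^ (ordCompl[q] (orderOf x)) with hy
      have hy1 : y ≠ 1 := by
        intro h
        have : orderOf x ∣ ordCompl[q] (orderOf x) := orderOf_dvd_of_pow_eq_one h
        exact Nat.not_dvd_ordCompl hqp ho0 (hqdvd.trans this)
      have hyA : y ∈ primaryPart M hMab q := by
        refine ⟨M.pow_mem hxM _, (orderOf x).factorization q, ?_⟩
        rw [← pow_mul, mul_comm, Nat.ordProj_mul_ordCompl_eq_self]
        exact pow_orderOf_eq_one x
      have hyC : y ∈ C q := (C q).pow_mem ((Finset.inf_le hqPf : Kt ≤ C q) hxKt) _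
      exact hy1 (Subgroup.disjoint_def.mp (hC1 q hqPf).disjoint hyA hyC)
    have hle1 : Nat.card M * Nat.card Kt ≤ Nat.card ↥Gα := myCardMulLe hdisjMKt
    have hle2 : Nat.card ↥Gα ≤ Nat.card M * Nat.card Kt := by
      have h1 : Nat.card Kt * Kt.index = Nat.card ↥Gα := Kt.card_mul_index
      calc Nat.card ↥Gα = Nat.card Kt * Kt.index := h1.symm
        _ ≤ Nat.card Kt * Nat.card M := Nat.mul_le_mul_left _ hKtidx
        _ = Nat.card M * Nat.card Kt := mul_comm _ _
    exact ⟨Kt, myComplement'2 hdisjMKt (le_antisymm hle1 hle2)⟩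
end
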